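/- arXiv:2602.08239 — 6 statements merged into one kernel-verified Lean document; each statement's English description precedes it below -/
import Mathlib

section
/- Let θ be an unregularized gradient-flow trajectory (λ(s) ≡ 0), i.e., θ′(s) = −∇R̃(θ(s)) with θ(0) = θ₀. Assume θ(s) lies in the closed ball of radius r around θ₀ for all s ∈ [0,t] and that f is L-Lipschitz on that ball. Then ‖θ(t) − θ₀‖ ≤ 2·L·‖f(θ₀) − Y‖·t. -/
open scoped RealInnerProductSpace

open Filter Topology

set_option maxHeartbeats 1000000 in
/-- Key auxiliary lemma: if `f` is differentiable and `L`-Lipschitz on a closed ball of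
positive radius, then at every point of the closed ball (including boundary points),
`‖fderiv ℝ f x‖ ≤ L`. -/
lemma norm_fderiv_le_of_lipschitzOn_closedBall
    {E F : Type*} [NormedAddCommGroup E] [InnerProductSpace ℝ E]
    [NormedAddCommGroup F] [InnerProductSpace ℝ F]
    (f : E → F) (hf : Differentiable ℝ f) {θ₀ : E} {r : ℝ} (hr : 0 < r) {L : NNReal}
    (hLip : LipschitzOnWith L f (Metric.closedBall θ₀ r))
    {x : E} (hx : x ∈ Metric.closedBall θ₀ r) :
    ‖fderiv ℝ f x‖ ≤ L := by
  rcases lt_or_eq_of_le (Metric.mem_closedBall.1 hx) with h | h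
  · -- interior case
    exact norm_fderiv_le_of_lipschitzOn ℝ
      (Metric.closedBall_mem_nhds_of_mem (Metric.mem_ball.2 h)) hLip
  · -- boundary case
    set A := fderiv ℝ f x with hA
    have hxθ : ‖x - θ₀‖ = r := by rwa [← dist_eq_norm]
    have he : x - θ₀ ≠ 0 := by
      intro h0
      rw [h0, norm_zero] at hxθ
      exact hr.ne' hxθ.symm
    -- Step 1: for directions pointing strictly into the ball
    have key : ∀ u : E, ⟪u, x - θ₀⟫ < 0 → ‖A u‖ ≤ L * ‖u‖ := by
      intro u hu
      have hmem : ∀ᶠ h in 𝓝[>] (0 : ℝ), x + h • u ∈ Metric.closedBall θ₀ r := by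
        have hlim : Tendsto (fun h : ℝ => 2 * ⟪u, x - θ₀⟫ + h * ‖u‖ ^ 2) (𝓝[>] 0)
            (𝓝 (2 * ⟪u, x - θ₀⟫ + 0 * ‖u‖ ^ 2)) := by
          exact (tendsto_const_nhds.add ((tendsto_id.mul tendsto_const_nhds))).mono_left
            nhdsWithin_le_nhds
        have hneg : 2 * ⟪u, x - θ₀⟫ + 0 * ‖u‖ ^ 2 < 0 := by nlinarith
        filter_upwards [hlim.eventually (eventually_lt_nhds hneg),
          self_mem_nhdsWithin] with h hh (hpos : 0 < h)
        have hsq : ‖x + h • u - θ₀‖ ^ 2 ≤ r ^ 2 := by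
          have : x + h • u - θ₀ = (x - θ₀) + h • u := by abel
          rw [this, norm_add_sq_real, hxθ, real_inner_smul_right, norm_smul,
            Real.norm_eq_abs, abs_of_pos hpos, mul_pow]
          have : ⟪x - θ₀, u⟫ = ⟪u, x - θ₀⟫ := real_inner_comm _ _
          nlinarith
        calc dist (x + h • u) θ₀ = ‖x + h • u - θ₀‖ := dist_eq_norm _ _
          _ ≤ r := by nlinarith [norm_nonneg (x + h • u - θ₀)]
      -- use directional limit of difference quotients
      have hder := ((hf x).hasFDerivAt.lim u (c := fun h : ℝ => h⁻¹) (l := 𝓝[>] (0:ℝ))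
        (by simpa only [Real.norm_eq_abs, Function.comp_def] using
          tendsto_abs_atTop_atTop.comp tendsto_inv_nhdsGT_zero)).norm
      simp only [inv_inv] at hder
      refine le_of_tendsto hder ?_
      filter_upwards [hmem, self_mem_nhdsWithin] with h hh (hpos : 0 < h)
      rw [norm_smul, Real.norm_eq_abs, abs_of_pos (inv_pos.2 hpos)]
      have h2 : ‖f (x + h • u) - f x‖ ≤ L * (h * ‖u‖) := by
        have := hLip.norm_sub_le hh hx
        calc ‖f (x + h • u) - f x‖ ≤ L * ‖x + h • u - x‖ := this
          _ = L * (h * ‖u‖) := by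
            rw [add_sub_cancel_left, norm_smul, Real.norm_eq_abs, abs_of_pos hpos]
      calc h⁻¹ * ‖f (x + h • u) - f x‖ ≤ h⁻¹ * (L * (h * ‖u‖)) := by
            exact mul_le_mul_of_nonneg_left h2 (inv_pos.2 hpos).le
        _ = L * ‖u‖ := by field_simp
    -- Step 2: extend to the closed half-space by continuity
    have key2 : ∀ u : E, ⟪u, x - θ₀⟫ ≤ 0 → ‖A u‖ ≤ L * ‖u‖ := by
      intro u hu
      have hlim1 : Tendsto (fun δ : ℝ => ‖A (u - δ • (x - θ₀))‖) (𝓝[>] 0) (𝓝 ‖A u‖) := by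
        have : Tendsto (fun δ : ℝ => u - δ • (x - θ₀)) (𝓝 0) (𝓝 (u - (0:ℝ) • (x - θ₀))) :=
          tendsto_const_nhds.sub (tendsto_id.smul tendsto_const_nhds)
        simpa using ((A.continuous.tendsto _).comp
          (this.mono_left nhdsWithin_le_nhds)).norm
      have hlim2 : Tendsto (fun δ : ℝ => (L : ℝ) * ‖u - δ • (x - θ₀)‖) (𝓝[>] 0)
          (𝓝 ((L : ℝ) * ‖u‖)) := by
        have : Tendsto (fun δ : ℝ => u - δ • (x - θ₀)) (𝓝 0) (𝓝 (u - (0:ℝ) • (x - θ₀))) :=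
          tendsto_const_nhds.sub (tendsto_id.smul tendsto_const_nhds)
        simpa using (tendsto_const_nhds.mul (this.mono_left nhdsWithin_le_nhds).norm)
      refine le_of_tendsto_of_tendsto hlim1 hlim2 ?_
      filter_upwards [self_mem_nhdsWithin] with δ (hδ : 0 < δ)
      refine key _ ?_
      have hne : ‖x - θ₀‖ ≠ 0 := norm_ne_zero_iff.2 he
      have hpos : (0:ℝ) < ‖x - θ₀‖ ^ 2 := by positivity
      rw [inner_sub_left, real_inner_smul_left, real_inner_self_eq_norm_sq]
      nlinarith
    -- Step 3: conclude via the operator norm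
    refine A.opNorm_le_bound L.coe_nonneg fun u => ?_
    rcases le_or_gt ⟪u, x - θ₀⟫ 0 with hu | hu
    · exact key2 u hu
    · have := key2 (-u) (by rw [inner_neg_left]; linarith)
      simpa using this

/-- For an unregularized gradient-flow trajectory of the squared loss that
stays in the closed `r`-ball around `θ₀` on `[0,t]`, and with `f` `L`-Lipschitz on that
ball, one has `‖θ(t) − θ₀‖ ≤ 2 L ‖f(θ₀) − Y‖ t`. -/
theorem parameter_deviation_bound_unregularized
    {E F : Type*} [NormedAddCommGroup E] [InnerProductSpace ℝ E] [FiniteDimensional ℝ E]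
    [NormedAddCommGroup F] [InnerProductSpace ℝ F] [FiniteDimensional ℝ F]
    (f : E → F) (hf : Differentiable ℝ f) (Y : F) (θ₀ : E) (r : ℝ) (L : NNReal)
    (θ : ℝ → E) (hθ₀ : θ 0 = θ₀)
    (hθ : ∀ s, HasDerivAt θ
      (-((2 : ℝ) • ((fderiv ℝ f (θ s)).adjoint (f (θ s) - Y)))) s)
    (t : ℝ) (ht : 0 ≤ t)
    (hball : ∀ s ∈ Set.Icc (0 : ℝ) t, θ s ∈ Metric.closedBall θ₀ r)
    (hLip : LipschitzOnWith L f (Metric.closedBall θ₀ r)) :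
    ‖θ t - θ₀‖ ≤ 2 * (L : ℝ) * ‖f θ₀ - Y‖ * t := by
  have h0mem : (0:ℝ) ∈ Set.Icc (0:ℝ) t := ⟨le_refl 0, ht⟩
  have hr0 : 0 ≤ r := by
    have := hball 0 h0mem
    rw [hθ₀, Metric.mem_closedBall, dist_self] at this
    exact this
  rcases hr0.eq_or_lt with hr | hr
  · -- r = 0 : trajectory is constant on [0, t]
    have hconst : θ t = θ₀ := by
      have := hball t ⟨ht, le_refl t⟩
      rw [Metric.mem_closedBall, ← hr, dist_le_zero] at this
      exact this
    rw [hconst, sub_self, norm_zero]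
    positivity
  · -- r > 0 : main case
    set u : ℝ → F := fun s => f (θ s) - Y with hu_def
    -- the composed derivative of u
    have hu' : ∀ s, HasDerivAt u
        (fderiv ℝ f (θ s) (-((2 : ℝ) • ((fderiv ℝ f (θ s)).adjoint (u s))))) s := by
      intro s
      exact ((hf (θ s)).hasFDerivAt.comp_hasDerivAt s (hθ s)).sub_const Y
    -- the squared residual is antitone
    have hRder : ∀ s, HasDerivAt (fun s => ⟪u s, u s⟫)
        (-(4 * ‖(fderiv ℝ f (θ s)).adjoint (u s)‖ ^ 2)) s := by
      intro s
      have h := (hu' s).inner ℝ (hu' s)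
      refine h.congr_deriv ?_
      set A := fderiv ℝ f (θ s)
      set v := A.adjoint (u s) with hv
      have h1 : ⟪u s, A (-((2:ℝ) • v))⟫ = -(2 * ‖v‖ ^ 2) := by
        rw [map_neg, map_smul, inner_neg_right, real_inner_smul_right]
        have : ⟪u s, A v⟫ = ⟪v, v⟫ := by
          have h3 := ContinuousLinearMap.adjoint_inner_left A v (u s)
          rw [← hv] at h3
          exact h3.symm
        rw [this, real_inner_self_eq_norm_sq]
      have h2 : ⟪A (-((2:ℝ) • v)), u s⟫ = -(2 * ‖v‖ ^ 2) := by
        rw [real_inner_comm]; exact h1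
      rw [h1, h2]; ring
    have hanti : AntitoneOn (fun s => ⟪u s, u s⟫) (Set.Icc 0 t) := by
      apply antitoneOn_of_deriv_nonpos (convex_Icc 0 t)
      · exact fun s _ => ((hRder s).continuousAt).continuousWithinAt
      · exact fun s _ => ((hRder s).differentiableAt).differentiableWithinAt
      · intro s _
        rw [(hRder s).deriv]
        have : (0:ℝ) ≤ 4 * ‖(fderiv ℝ f (θ s)).adjoint (u s)‖ ^ 2 := by positivity
        linarith
    -- norm of residual is bounded by its initial value
    have hres : ∀ s ∈ Set.Icc (0:ℝ) t, ‖u s‖ ≤ ‖f θ₀ - Y‖ := by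
      intro s hs
      have h1 : ⟪u s, u s⟫ ≤ ⟪u 0, u 0⟫ := hanti h0mem hs hs.1
      rw [real_inner_self_eq_norm_sq, real_inner_self_eq_norm_sq] at h1
      have : u 0 = f θ₀ - Y := by rw [hu_def]; simp [hθ₀]
      rw [this] at h1
      nlinarith [norm_nonneg (u s), norm_nonneg (f θ₀ - Y)]
    -- bound on the speed
    have hspeed : ∀ s ∈ Set.Icc (0:ℝ) t,
        ‖-((2 : ℝ) • ((fderiv ℝ f (θ s)).adjoint (u s)))‖ ≤ 2 * (L:ℝ) * ‖f θ₀ - Y‖ := by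
      intro s hs
      rw [norm_neg, norm_smul, Real.norm_ofNat]
      have hAle : ‖fderiv ℝ f (θ s)‖ ≤ (L:ℝ) :=
        norm_fderiv_le_of_lipschitzOn_closedBall f hf hr hLip (hball s hs)
      have hadj : ‖(fderiv ℝ f (θ s)).adjoint‖ = ‖fderiv ℝ f (θ s)‖ :=
        LinearIsometryEquiv.norm_map ContinuousLinearMap.adjoint _
      calc 2 * ‖(fderiv ℝ f (θ s)).adjoint (u s)‖
          ≤ 2 * (‖(fderiv ℝ f (θ s)).adjoint‖ * ‖u s‖) := by
            have := (fderiv ℝ f (θ s)).adjoint.le_opNorm (u s)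
            linarith
        _ ≤ 2 * ((L:ℝ) * ‖f θ₀ - Y‖) := by
            rw [hadj]
            have h1 := hres s hs
            have h2 : (0:ℝ) ≤ ‖u s‖ := norm_nonneg _
            nlinarith [norm_nonneg (fderiv ℝ f (θ s)), NNReal.coe_nonneg L]
        _ = 2 * (L:ℝ) * ‖f θ₀ - Y‖ := by ring
    -- mean value inequality
    have hmain := Convex.norm_image_sub_le_of_norm_hasDerivWithin_le
      (f := θ) (f' := fun s => -((2 : ℝ) • ((fderiv ℝ f (θ s)).adjoint (u s))))
      (s := Set.Icc (0:ℝ) t) (C := 2 * (L:ℝ) * ‖f θ₀ - Y‖)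
      (fun s _ => (hθ s).hasDerivWithinAt) hspeed (convex_Icc 0 t) h0mem ⟨ht, le_refl t⟩
    rw [hθ₀, sub_zero, Real.norm_eq_abs, abs_of_nonneg ht] at hmain
    exact hmain
end

section
/- Along a regularized gradient-flow trajectory θ with regularization λ(s) ≥ 0, at any time s where θ(s) ≠ θ₀, θ(s) lies in the closed ball of radius r around θ₀, and f is L-Lipschitz on that ball, the function w(s) = ‖θ(s) − θ₀‖ satisfies the differential inequality w′(s) ≤ −λ(s)·w(s) + 2·L·‖f(θ(s)) − Y‖. -/
open scoped RealInnerProductSpace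

/-- If a function has derivative `d` at `0` and satisfies a one-sided Lipschitz-type bound
`‖h t - h 0‖ ≤ C * |t|` for `t` near `0` from the left, then `‖d‖ ≤ C`. -/
lemma norm_deriv_le_of_left_bound_aux {F : Type*} [NormedAddCommGroup F] [NormedSpace ℝ F]
    {h : ℝ → F} {d : F} {C : ℝ}
    (hd : HasDerivAt h d 0)
    (hb : ∀ᶠ t in nhdsWithin (0:ℝ) (Set.Iio 0), ‖h t - h 0‖ ≤ C * |t|) : ‖d‖ ≤ C := by
  refine le_of_forall_pos_le_add fun ε hε => ?_
  have hdw : HasDerivWithinAt h d (Set.Iio 0) 0 := hd.hasDerivWithinAt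
  have hlo := Asymptotics.isLittleO_iff.1 hdw.isLittleO hε
  have h3 : ∀ᶠ t in nhdsWithin (0:ℝ) (Set.Iio 0), t ∈ Set.Iio (0:ℝ) :=
    self_mem_nhdsWithin
  have : ∀ᶠ t in nhdsWithin (0:ℝ) (Set.Iio 0),
      ‖d‖ ≤ C + ε := by
    filter_upwards [hb, hlo, h3] with t h1 h2 h3
    have ht : t < 0 := h3
    have habs : 0 < |t| := abs_pos.2 (ne_of_lt ht)
    have : ‖(t - 0) • d‖ ≤ ‖h t - h 0‖ + ‖h t - h 0 - (t - 0) • d‖ := by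
      have h4 : h t - h 0 - (h t - h 0 - (t - 0) • d) = (t - 0) • d := by abel
      calc ‖(t - 0) • d‖ = ‖h t - h 0 - (h t - h 0 - (t - 0) • d)‖ := by rw [h4]
        _ ≤ ‖h t - h 0‖ + ‖h t - h 0 - (t - 0) • d‖ := norm_sub_le _ _
    have h5 : ‖(t - 0) • d‖ = |t| * ‖d‖ := by
      rw [norm_smul, sub_zero, Real.norm_eq_abs]
    have h6 : ‖h t - h 0 - (t - 0) • d‖ ≤ ε * |t| := by
      simpa [Real.norm_eq_abs] using h2
    have h7 : |t| * ‖d‖ ≤ C * |t| + ε * |t| := by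
      rw [← h5]; exact this.trans (add_le_add h1 h6)
    have h8 : |t| * ‖d‖ ≤ |t| * (C + ε) := by ring_nf; ring_nf at h7; linarith
    exact le_of_mul_le_mul_left h8 habs
  rcases this.exists with ⟨t, ht⟩
  exact ht

/-- Directional derivative bound at a (possibly boundary) point of the closed ball,
along the direction `v = x - θ₀` (so that moving backwards stays in the ball). -/
lemma fderiv_dir_bound_aux {E F : Type*} [NormedAddCommGroup E] [InnerProductSpace ℝ E]
    [NormedAddCommGroup F] [InnerProductSpace ℝ F]
    {f : E → F} (hf : Differentiable ℝ f) {θ₀ x : E} {r : ℝ} {L : NNReal}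
    (hx : x ∈ Metric.closedBall θ₀ r)
    (hLip : LipschitzOnWith L f (Metric.closedBall θ₀ r)) :
    ‖(fderiv ℝ f x) (x - θ₀)‖ ≤ (L : ℝ) * ‖x - θ₀‖ := by
  set v := x - θ₀ with hv
  have hvr : ‖v‖ ≤ r := by
    simpa [hv, dist_eq_norm] using hx
  have hline : HasDerivAt (fun t : ℝ => x + t • v) v 0 := by
    simpa using ((hasDerivAt_id (0:ℝ)).smul_const v).const_add x
  have hd : HasDerivAt (fun t : ℝ => f (x + t • v)) ((fderiv ℝ f x) v) 0 := by
    have := (hf (x + (0:ℝ) • v)).hasFDerivAt.comp_hasDerivAt 0 hline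
    simpa [Function.comp_def] using this
  refine norm_deriv_le_of_left_bound_aux hd ?_
  have hmem : Set.Ioo (-1 : ℝ) 0 ∈ nhdsWithin (0:ℝ) (Set.Iio 0) := by
    rw [← Set.Iio_inter_Ioi]
    exact Filter.inter_mem self_mem_nhdsWithin
      (mem_nhdsWithin_of_mem_nhds (Ioi_mem_nhds (by norm_num)))
  filter_upwards [hmem] with t ht
  have hball' : ∀ u : ℝ, -1 ≤ u → u ≤ 0 → x + u • v ∈ Metric.closedBall θ₀ r := by
    intro u h1 h2
    have : x + u • v - θ₀ = (1 + u) • v := by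
      rw [hv]; module
    rw [Metric.mem_closedBall, dist_eq_norm, this, norm_smul, Real.norm_eq_abs,
      abs_of_nonneg (by linarith)]
    nlinarith [norm_nonneg v]
  have h1 := hLip.norm_sub_le (hball' t ht.1.le ht.2.le) (by simpa using hx)
  calc ‖f (x + t • v) - f (x + (0:ℝ) • v)‖ = ‖f (x + t • v) - f x‖ := by norm_num
    _ ≤ (L : ℝ) * ‖x + t • v - x‖ := by simpa using h1
    _ = (L : ℝ) * ‖v‖ * |t| := by
        rw [add_sub_cancel_left, norm_smul, Real.norm_eq_abs]; ring

/-- Along a regularized gradient-flow trajectory, at any time `s` with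
`θ(s) ≠ θ₀`, `θ(s)` in the closed `r`-ball around `θ₀` and `f` `L`-Lipschitz on that
ball, the function `w(s) = ‖θ(s) − θ₀‖` satisfies
`w′(s) ≤ −λ(s) w(s) + 2 L ‖f(θ(s)) − Y‖`. -/
theorem norm_deviation_differential_inequality
    {E F : Type*} [NormedAddCommGroup E] [InnerProductSpace ℝ E] [FiniteDimensional ℝ E]
    [NormedAddCommGroup F] [InnerProductSpace ℝ F] [FiniteDimensional ℝ F]
    (f : E → F) (hf : Differentiable ℝ f) (Y : F) (θ₀ : E) (r : ℝ) (L : NNReal)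
    (lam : ℝ → ℝ) (hlam : ∀ u, 0 ≤ lam u)
    (θ : ℝ → E) (hθ₀ : θ 0 = θ₀)
    (hθ : ∀ u, HasDerivAt θ
      (-((2 : ℝ) • ((fderiv ℝ f (θ u)).adjoint (f (θ u) - Y)))
        - lam u • (θ u - θ₀)) u)
    (s : ℝ) (hne : θ s ≠ θ₀)
    (hball : θ s ∈ Metric.closedBall θ₀ r)
    (hLip : LipschitzOnWith L f (Metric.closedBall θ₀ r)) :
    deriv (fun u => ‖θ u - θ₀‖) s ≤
      -(lam s) * ‖θ s - θ₀‖ + 2 * (L : ℝ) * ‖f (θ s) - Y‖ := by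
  set v : E := θ s - θ₀ with hvdef
  set z : F := f (θ s) - Y with hzdef
  set D : E := -((2 : ℝ) • ((fderiv ℝ f (θ s)).adjoint z)) - lam s • v with hDdef
  have hvne : v ≠ 0 := sub_ne_zero.2 hne
  have hvpos : (0:ℝ) < ‖v‖ := norm_pos_iff.2 hvne
  have hg : HasDerivAt (fun u => θ u - θ₀) D s := (hθ s).sub_const θ₀
  have hwdiff : DifferentiableAt ℝ (fun u => ‖θ u - θ₀‖) s :=
    hg.differentiableAt.norm ℝ hvne
  set w' : ℝ := deriv (fun u => ‖θ u - θ₀‖) s with hw'def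
  have hw : HasDerivAt (fun u => ‖θ u - θ₀‖) w' s := hwdiff.hasDerivAt
  -- derivative of the squared norm, computed two ways
  have hsq1 : HasDerivAt (fun u => ‖θ u - θ₀‖ ^ 2) (2 * ⟪v, D⟫) s := hg.norm_sq
  have hsq2 : HasDerivAt (fun u => ‖θ u - θ₀‖ ^ 2) (2 * ‖v‖ * w') s := by
    have := hw.pow 2
    simpa [hvdef, Pi.pow_def] using this
  have hkey : 2 * ⟪v, D⟫ = 2 * ‖v‖ * w' := hsq1.unique hsq2
  -- bound the inner product
  have hadj : ⟪v, (fderiv ℝ f (θ s)).adjoint z⟫ = ⟪(fderiv ℝ f (θ s)) v, z⟫ :=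
    ContinuousLinearMap.adjoint_inner_right _ _ _
  have hdir : ‖(fderiv ℝ f (θ s)) v‖ ≤ (L : ℝ) * ‖v‖ :=
    fderiv_dir_bound_aux hf hball hLip
  have hinner : |⟪(fderiv ℝ f (θ s)) v, z⟫| ≤ (L : ℝ) * ‖v‖ * ‖z‖ :=
    (abs_real_inner_le_norm _ _).trans
      (mul_le_mul_of_nonneg_right hdir (norm_nonneg _))
  have hvD : ⟪v, D⟫ ≤ ‖v‖ * (-(lam s) * ‖v‖ + 2 * (L : ℝ) * ‖z‖) := by
    have e1 : ⟪v, D⟫ = -(2 * ⟪(fderiv ℝ f (θ s)) v, z⟫) - lam s * (‖v‖ ^ 2) := by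
      rw [hDdef, inner_sub_right, inner_neg_right, inner_smul_right, inner_smul_right,
        hadj, real_inner_self_eq_norm_sq]
    rw [e1]
    have h2 : -(2 * ⟪(fderiv ℝ f (θ s)) v, z⟫) ≤ 2 * ((L : ℝ) * ‖v‖ * ‖z‖) := by
      have hab := abs_le.1 hinner
      nlinarith [hab.1, hab.2]
    nlinarith
  -- conclude
  have h2v : 2 * ‖v‖ * w' ≤ 2 * ‖v‖ * (-(lam s) * ‖v‖ + 2 * (L : ℝ) * ‖z‖) := by
    rw [← hkey]; nlinarith
  exact le_of_mul_le_mul_left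
    (by linarith : ‖v‖ * w' ≤ ‖v‖ * (-(lam s) * ‖v‖ + 2 * (L:ℝ) * ‖z‖)) hvpos
end

section
/- Let θ be a regularized gradient-flow trajectory with constant regularization λ > 0 such that ⟪∇R̃(θ(s)), θ(s) − θ₀⟫ ≥ 0 for all s ∈ [0,t], and assume θ(s) lies in the closed ball B of radius r around θ₀ for all s ∈ [0,t]. Assume f is L-Lipschitz on B and θ ↦ Df(θ) is L′-Lipschitz on B (in operator norm). Let Ȳ : [0,∞) → F be the linearized-model output trajectory, i.e., Ȳ(0) = f(θ₀) and Ȳ′(s) = −2·k_{θ₀}(Ȳ(s) − Y). Then ‖f(θ(t)) − Ȳ(t)‖ ≤ b·(t − (1 − e^{−λt})/λ), where b = 2·L²·‖f(θ₀) − Y‖·((4/λ)·L′·‖f(θ₀) − Y‖ + 1). -/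
open scoped RealInnerProductSpace


theorem aux_fderiv_bound
    {E F : Type*} [NormedAddCommGroup E] [InnerProductSpace ℝ E]
    [NormedAddCommGroup F] [InnerProductSpace ℝ F]
    (f : E → F) (hf : Differentiable ℝ f) (θ₀ : E) (r : ℝ) (hr : 0 < r) (L L' : NNReal)
    (hLip : LipschitzOnWith L f (Metric.closedBall θ₀ r))
    (hLip' : LipschitzOnWith L' (fun ζ => fderiv ℝ f ζ) (Metric.closedBall θ₀ r)) :
    ∀ x ∈ Metric.closedBall θ₀ r, ‖fderiv ℝ f x‖ ≤ L := by
  intro x hx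
  refine le_of_forall_pos_le_add ?_
  intro ε hε
  set K : ℝ := (L' : ℝ) * ‖x - θ₀‖ with hK
  have hK0 : 0 ≤ K := mul_nonneg L'.coe_nonneg (norm_nonneg _)
  set δ : ℝ := min (1/2) (ε / (K + 1)) with hδ
  have hδ0 : 0 < δ := lt_min (by norm_num) (div_pos hε (by linarith))
  have hδ1 : δ < 1 := lt_of_le_of_lt (min_le_left _ _) (by norm_num)
  set c : ℝ := 1 - δ with hc
  set y : E := θ₀ + c • (x - θ₀) with hy
  have hxball : ‖x - θ₀‖ ≤ r := by
    simpa [dist_eq_norm] using Metric.mem_closedBall.mp hx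
  have hyball : y ∈ Metric.ball θ₀ r := by
    have : ‖y - θ₀‖ = c * ‖x - θ₀‖ := by
      simp [hy, norm_smul, abs_of_nonneg (by linarith : (0:ℝ) ≤ c)]
    rw [Metric.mem_ball, dist_eq_norm, this]
    calc c * ‖x - θ₀‖ ≤ c * r := by
          apply mul_le_mul_of_nonneg_left hxball (by linarith)
      _ < 1 * r := by apply mul_lt_mul_of_pos_right (by linarith) hr
      _ = r := one_mul r
  have hymem : y ∈ Metric.closedBall θ₀ r := Metric.ball_subset_closedBall hyball
  have hynorm : ‖fderiv ℝ f y‖ ≤ L :=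
    norm_fderiv_le_of_lipschitzOn ℝ
      (Metric.closedBall_mem_nhds_of_mem hyball) hLip
  have hdxy : dist x y = δ * ‖x - θ₀‖ := by
    have : x - y = δ • (x - θ₀) := by
      simp only [hy, hc]
      module
    rw [dist_eq_norm, this, norm_smul, Real.norm_eq_abs, abs_of_pos hδ0]
  have hLipd : dist (fderiv ℝ f x) (fderiv ℝ f y) ≤ (L' : ℝ) * dist x y :=
    hLip'.dist_le_mul x hx y hymem
  have h1 : ‖fderiv ℝ f x‖ ≤ ‖fderiv ℝ f y‖ + dist (fderiv ℝ f x) (fderiv ℝ f y) := by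
    rw [dist_eq_norm]
    have := norm_sub_norm_le (fderiv ℝ f x) (fderiv ℝ f y)
    linarith [norm_sub_norm_le (fderiv ℝ f x) (fderiv ℝ f y)]
  have h2 : (L' : ℝ) * dist x y ≤ ε := by
    rw [hdxy, ← mul_assoc]
    have hδε : δ ≤ ε / (K + 1) := min_le_right _ _
    calc (L' : ℝ) * δ * ‖x - θ₀‖ = δ * K := by rw [hK]; ring
      _ ≤ (ε / (K + 1)) * K := by
          apply mul_le_mul_of_nonneg_right hδε hK0
      _ ≤ ε := by
          rw [div_mul_eq_mul_div, div_le_iff₀ (by linarith)]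
          nlinarith
  linarith

set_option maxHeartbeats 2000000 in
/-- With constant regularization `λ > 0`, the selective condition
`⟪∇R̃(θ(s)), θ(s) − θ₀⟫ ≥ 0` on `[0,t]`, the trajectory staying in the closed `r`-ball
`B` around `θ₀`, `f` `L`-Lipschitz on `B` and `θ ↦ Df(θ)` `L′`-Lipschitz on `B`, the
output of the regularized flow and the linearized-model output `Ȳ` (with
`Ȳ(0) = f(θ₀)`, `Ȳ′ = −2 k_{θ₀}(Ȳ − Y)`) satisfy
`‖f(θ(t)) − Ȳ(t)‖ ≤ b (t − (1 − e^{−λt})/λ)` with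
`b = 2 L² ‖f(θ₀) − Y‖ ((4/λ) L′ ‖f(θ₀) − Y‖ + 1)`. -/
theorem linearization_gap_bound
    {E F : Type*} [NormedAddCommGroup E] [InnerProductSpace ℝ E] [FiniteDimensional ℝ E]
    [NormedAddCommGroup F] [InnerProductSpace ℝ F] [FiniteDimensional ℝ F]
    (f : E → F) (hf : Differentiable ℝ f) (Y : F) (θ₀ : E) (r : ℝ) (L L' : NNReal)
    (lam : ℝ) (hlam : 0 < lam)
    (θ : ℝ → E) (hθ₀ : θ 0 = θ₀)
    (hθ : ∀ s, HasDerivAt θ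
      (-((2 : ℝ) • ((fderiv ℝ f (θ s)).adjoint (f (θ s) - Y)))
        - lam • (θ s - θ₀)) s)
    (Ybar : ℝ → F) (hY0 : Ybar 0 = f θ₀)
    (hYbar : ∀ s, HasDerivAt Ybar
      (-((2 : ℝ) • ((fderiv ℝ f θ₀) ((fderiv ℝ f θ₀).adjoint (Ybar s - Y))))) s)
    (t : ℝ) (ht : 0 ≤ t)
    (hsel : ∀ s ∈ Set.Icc (0 : ℝ) t,
      0 ≤ ⟪(2 : ℝ) • ((fderiv ℝ f (θ s)).adjoint (f (θ s) - Y)), θ s - θ₀⟫)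
    (hball : ∀ s ∈ Set.Icc (0 : ℝ) t, θ s ∈ Metric.closedBall θ₀ r)
    (hLip : LipschitzOnWith L f (Metric.closedBall θ₀ r))
    (hLip' : LipschitzOnWith L' (fun ζ => fderiv ℝ f ζ) (Metric.closedBall θ₀ r)) :
    ‖f (θ t) - Ybar t‖ ≤
      (2 * (L : ℝ) ^ 2 * ‖f θ₀ - Y‖ * ((4 / lam) * (L' : ℝ) * ‖f θ₀ - Y‖ + 1)) *
        (t - (1 - Real.exp (-(lam * t))) / lam) := by
  set V : ℝ := ‖f θ₀ - Y‖ with hVdef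
  have hV0 : 0 ≤ V := norm_nonneg _
  -- derivative of s ↦ f (θ s)
  have hg : ∀ s, HasDerivAt (fun u => f (θ u))
      ((fderiv ℝ f (θ s)) (-((2 : ℝ) • ((fderiv ℝ f (θ s)).adjoint (f (θ s) - Y)))
        - lam • (θ s - θ₀))) s :=
    fun s => ((hf (θ s)).hasFDerivAt).comp_hasDerivAt s (hθ s)
  -- Milestone 1 : risk monotone
  have hV : ∀ s ∈ Set.Icc (0:ℝ) t, ‖f (θ s) - Y‖ ≤ V := by
    have hφ : ∀ s, HasDerivAt (fun u => ⟪f (θ u) - Y, f (θ u) - Y⟫)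
        (⟪f (θ s) - Y, (fderiv ℝ f (θ s)) (-((2 : ℝ) • ((fderiv ℝ f (θ s)).adjoint (f (θ s) - Y)))
          - lam • (θ s - θ₀))⟫
         + ⟪(fderiv ℝ f (θ s)) (-((2 : ℝ) • ((fderiv ℝ f (θ s)).adjoint (f (θ s) - Y)))
          - lam • (θ s - θ₀)), f (θ s) - Y⟫) s := by
      intro s
      exact HasDerivAt.inner ℝ ((hg s).sub_const Y) ((hg s).sub_const Y)
    have hanti : AntitoneOn (fun u => ⟪f (θ u) - Y, f (θ u) - Y⟫) (Set.Icc 0 t) := by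
      apply antitoneOn_of_deriv_nonpos (convex_Icc 0 t)
      · exact fun s _ => ((hφ s).continuousAt).continuousWithinAt
      · exact fun s _ => ((hφ s).differentiableAt).differentiableWithinAt
      · intro s hs
        rw [interior_Icc] at hs
        rw [(hφ s).deriv]
        set d := fderiv ℝ f (θ s)
        set A : E := d.adjoint (f (θ s) - Y) with hA
        have e1 : ⟪f (θ s) - Y, d (-((2:ℝ) • A) - lam • (θ s - θ₀))⟫
            = ⟪A, -((2:ℝ) • A) - lam • (θ s - θ₀)⟫ := by
          rw [← ContinuousLinearMap.adjoint_inner_left]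
        have e2 : ⟪d (-((2:ℝ) • A) - lam • (θ s - θ₀)), f (θ s) - Y⟫
            = ⟪-((2:ℝ) • A) - lam • (θ s - θ₀), A⟫ := by
          rw [← ContinuousLinearMap.adjoint_inner_right]
        rw [e1, e2]
        have hsel' : 0 ≤ ⟪A, θ s - θ₀⟫ := by
          have := hsel s (Set.mem_Icc.mpr ⟨le_of_lt hs.1, le_of_lt hs.2⟩)
          rw [real_inner_smul_left] at this
          linarith
        have expand : ⟪A, -((2:ℝ) • A) - lam • (θ s - θ₀)⟫
            = -(2 * ⟪A, A⟫) - lam * ⟪A, θ s - θ₀⟫ := by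
          rw [inner_sub_right, inner_neg_right, real_inner_smul_right, real_inner_smul_right]
        have hcomm : ⟪-((2:ℝ) • A) - lam • (θ s - θ₀), A⟫
            = ⟪A, -((2:ℝ) • A) - lam • (θ s - θ₀)⟫ := real_inner_comm _ _
        rw [hcomm, expand]
        have : 0 ≤ ⟪A, A⟫ := real_inner_self_nonneg
        nlinarith [hlam.le]
    intro s hs
    have h1 : ⟪f (θ s) - Y, f (θ s) - Y⟫ ≤ ⟪f (θ 0) - Y, f (θ 0) - Y⟫ :=
      hanti (Set.left_mem_Icc.mpr ht) hs hs.1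
    rw [hθ₀, real_inner_self_eq_norm_sq, real_inner_self_eq_norm_sq] at h1
    exact (pow_le_pow_iff_left₀ (norm_nonneg _) hV0 two_ne_zero).mp h1
  -- r nonneg
  have hr0 : 0 ≤ r := by
    have h := hball 0 (Set.left_mem_Icc.mpr ht)
    rw [hθ₀] at h
    simpa using h
  -- Milestone 3 : trajectory distance bound
  have hρ : ∀ s ∈ Set.Icc (0:ℝ) t,
      ‖θ s - θ₀‖ ≤ 2 * (L:ℝ) * V / lam * (1 - Real.exp (-(lam * s))) := by
    have hexp1 : ∀ s : ℝ, 0 ≤ s → Real.exp (-(lam * s)) ≤ 1 := by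
      intro s hs
      exact Real.exp_le_one_iff.mpr (by nlinarith [hlam.le])
    rcases hr0.eq_or_lt with hr | hr
    · intro s hs
      have h := hball s hs
      rw [Metric.mem_closedBall, ← hr] at h
      have : θ s = θ₀ := by
        have := dist_le_zero.mp h
        exact this
      rw [this]
      simp only [sub_self, norm_zero]
      have h1 : 0 ≤ 1 - Real.exp (-(lam * s)) := by linarith [hexp1 s hs.1]
      positivity
    · have hd : ∀ x ∈ Metric.closedBall θ₀ r, ‖fderiv ℝ f x‖ ≤ L :=
        aux_fderiv_bound f hf θ₀ r hr L L' hLip hLip'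
      have hexpd : ∀ s : ℝ, HasDerivAt (fun u => Real.exp (lam * u))
          (Real.exp (lam * s) * lam) s := by
        intro s
        have h1 : HasDerivAt (fun u : ℝ => lam * u) lam s := by
          simpa using (hasDerivAt_id s).const_mul lam
        exact (Real.hasDerivAt_exp (lam * s)).comp s h1
      have hψ : ∀ s : ℝ, HasDerivAt (fun u => Real.exp (lam * u) • (θ u - θ₀))
          (Real.exp (lam * s) • (-((2 : ℝ) •
            ((fderiv ℝ f (θ s)).adjoint (f (θ s) - Y))))) s := by
        intro s
        have h2 := (hexpd s).smul ((hθ s).sub_const θ₀)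
        convert h2 using 1
        · rfl
        module
      have hB : ∀ s : ℝ, HasDerivAt (fun u => 2 * (L:ℝ) * V / lam * (Real.exp (lam * u) - 1))
          (2 * (L:ℝ) * V * Real.exp (lam * s)) s := by
        intro s
        have h3 := ((hexpd s).sub_const 1).const_mul (2 * (L:ℝ) * V / lam)
        convert h3 using 1
        · rfl
        · rfl
        field_simp
      have main := image_norm_le_of_norm_deriv_right_le_deriv_boundary
        (f := fun u => Real.exp (lam * u) • (θ u - θ₀)) (a := 0) (b := t)
        (fun s _ => ((hψ s).continuousAt).continuousWithinAt)
        (fun s _ => (hψ s).hasDerivWithinAt)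
        (B := fun u => 2 * (L:ℝ) * V / lam * (Real.exp (lam * u) - 1))
        (B' := fun u => 2 * (L:ℝ) * V * Real.exp (lam * u))
        (by simp [hθ₀]) hB ?_
      · intro s hs
        have h := main hs
        simp only [norm_smul, Real.norm_eq_abs, abs_of_pos (Real.exp_pos _)] at h
        have hinv : Real.exp (-(lam * s)) * Real.exp (lam * s) = 1 := by
          rw [← Real.exp_add]
          simp
        have hkey : ‖θ s - θ₀‖ = Real.exp (-(lam * s)) * (Real.exp (lam * s) * ‖θ s - θ₀‖) := by
          rw [← mul_assoc, hinv, one_mul]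
        calc ‖θ s - θ₀‖
            = Real.exp (-(lam * s)) * (Real.exp (lam * s) * ‖θ s - θ₀‖) := hkey
          _ ≤ Real.exp (-(lam * s)) * (2 * (L:ℝ) * V / lam * (Real.exp (lam * s) - 1)) :=
              mul_le_mul_of_nonneg_left h (Real.exp_nonneg _)
          _ = 2 * (L:ℝ) * V / lam * (1 - Real.exp (-(lam * s))) := by
              linear_combination (2 * (L:ℝ) * V / lam) * hinv
      · intro s hs
        have hsIcc : s ∈ Set.Icc (0:ℝ) t := ⟨hs.1, hs.2.le⟩
        have hA : ‖(fderiv ℝ f (θ s)).adjoint (f (θ s) - Y)‖ ≤ (L:ℝ) * V := by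
          calc ‖(fderiv ℝ f (θ s)).adjoint (f (θ s) - Y)‖
              ≤ ‖(fderiv ℝ f (θ s)).adjoint‖ * ‖f (θ s) - Y‖ :=
                ContinuousLinearMap.le_opNorm _ _
            _ ≤ (L:ℝ) * V := by
                apply mul_le_mul ?_ (hV s hsIcc) (norm_nonneg _) L.coe_nonneg
                rw [ContinuousLinearMap.adjoint.norm_map]
                exact hd (θ s) (hball s hsIcc)
        rw [norm_smul, Real.norm_eq_abs, abs_of_pos (Real.exp_pos _), norm_neg, norm_smul]
        rw [Real.norm_eq_abs]
        calc Real.exp (lam * s) * (|2| * ‖(fderiv ℝ f (θ s)).adjoint (f (θ s) - Y)‖)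
            ≤ Real.exp (lam * s) * (2 * ((L:ℝ) * V)) := by
              apply mul_le_mul_of_nonneg_left ?_ (Real.exp_nonneg _)
              rw [abs_two]
              linarith
          _ = 2 * (L:ℝ) * V * Real.exp (lam * s) := by ring
  obtain ⟨d₀, hd₀def⟩ : ∃ d : E →L[ℝ] F, d = fderiv ℝ f θ₀ := ⟨_, rfl⟩
  obtain ⟨bc, hbdef⟩ : ∃ c : ℝ, c = 2 * (L:ℝ)^2 * V * ((4/lam) * (L':ℝ) * V + 1) := ⟨_, rfl⟩
  have hb0 : 0 ≤ bc := by
    have h1 : 0 ≤ (4/lam) * (L':ℝ) * V :=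
      mul_nonneg (mul_nonneg (div_nonneg (by norm_num) hlam.le) L'.coe_nonneg) hV0
    have h2 : 0 ≤ 2*(L:ℝ)^2*V := by positivity
    nlinarith
  obtain ⟨err, herrdef⟩ : ∃ g : ℝ → F, g = fun s =>
      -((2:ℝ) • ((fderiv ℝ f (θ s)) ((fderiv ℝ f (θ s)).adjoint (f (θ s) - Y))
          - d₀ (d₀.adjoint (f (θ s) - Y))))
        - lam • ((fderiv ℝ f (θ s)) (θ s - θ₀)) := ⟨_, rfl⟩
  have hexp1 : ∀ s : ℝ, 0 ≤ s → 0 ≤ 1 - Real.exp (-(lam * s)) := by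
    intro s hs
    have := Real.exp_le_one_iff.mpr (neg_nonpos.mpr (mul_nonneg hlam.le hs))
    linarith
  -- Milestone 4 : error bound
  have hE : ∀ s ∈ Set.Icc (0:ℝ) t, ‖err s‖ ≤ bc * (1 - Real.exp (-(lam * s))) := by
    rcases hr0.eq_or_lt with hr | hr
    · intro s hs
      have h := hball s hs
      rw [Metric.mem_closedBall, ← hr] at h
      have hθs : θ s = θ₀ := dist_le_zero.mp h
      have hz : err s = 0 := by
        simp only [herrdef, hθs, ← hd₀def, sub_self, smul_zero, map_zero, neg_zero, zero_sub,
          neg_eq_zero, neg_sub]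
      rw [hz, norm_zero]
      exact mul_nonneg hb0 (hexp1 s hs.1)
    · have hd : ∀ x ∈ Metric.closedBall θ₀ r, ‖fderiv ℝ f x‖ ≤ L :=
        aux_fderiv_bound f hf θ₀ r hr L L' hLip hLip'
      intro s hs
      have hθmem := hball s hs
      have hθ₀mem : θ₀ ∈ Metric.closedBall θ₀ r := Metric.mem_closedBall_self hr0
      obtain ⟨ds, hdsdef⟩ : ∃ d : E →L[ℝ] F, d = fderiv ℝ f (θ s) := ⟨_, rfl⟩
      obtain ⟨v, hvdef⟩ : ∃ w : F, w = f (θ s) - Y := ⟨_, rfl⟩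
      obtain ⟨ρ, hρdef⟩ : ∃ x : ℝ, x = ‖θ s - θ₀‖ := ⟨_, rfl⟩
      have hρ0 : 0 ≤ ρ := hρdef ▸ norm_nonneg _
      have hvV : ‖v‖ ≤ V := hvdef ▸ hV s hs
      have hdsL : ‖ds‖ ≤ L := hdsdef ▸ hd (θ s) hθmem
      have hd₀L : ‖d₀‖ ≤ L := hd₀def ▸ hd θ₀ hθ₀mem
      have hsub : ‖ds - d₀‖ ≤ (L':ℝ) * ρ := by
        have h := hLip'.dist_le_mul (θ s) hθmem θ₀ hθ₀mem
        rw [dist_eq_norm, dist_eq_norm] at h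
        rw [hdsdef, hd₀def, hρdef]
        exact h
      have hsplit : ds (ds.adjoint v) - d₀ (d₀.adjoint v)
          = ds (ds.adjoint v - d₀.adjoint v) + (ds - d₀) (d₀.adjoint v) := by
        simp only [map_sub, ContinuousLinearMap.sub_apply]
        abel
      have hadj_sub : ‖ds.adjoint v - d₀.adjoint v‖ ≤ (L':ℝ) * ρ * V := by
        have heq : ds.adjoint v - d₀.adjoint v = (ds - d₀).adjoint v := by
          rw [map_sub]
          rfl
        rw [heq]
        calc ‖(ds - d₀).adjoint v‖ ≤ ‖(ds - d₀).adjoint‖ * ‖v‖ :=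
              ContinuousLinearMap.le_opNorm _ _
          _ ≤ ((L':ℝ) * ρ) * V := by
              apply mul_le_mul ?_ hvV (norm_nonneg _) (by positivity)
              rw [ContinuousLinearMap.adjoint.norm_map]
              exact hsub
          _ = (L':ℝ) * ρ * V := by ring
      have hterm1 : ‖ds (ds.adjoint v - d₀.adjoint v)‖ ≤ (L:ℝ) * ((L':ℝ) * ρ * V) := by
        calc ‖ds (ds.adjoint v - d₀.adjoint v)‖ ≤ ‖ds‖ * ‖ds.adjoint v - d₀.adjoint v‖ :=
              ContinuousLinearMap.le_opNorm _ _
          _ ≤ (L:ℝ) * ((L':ℝ) * ρ * V) :=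
              mul_le_mul hdsL hadj_sub (norm_nonneg _) L.coe_nonneg
      have hterm2 : ‖(ds - d₀) (d₀.adjoint v)‖ ≤ ((L':ℝ) * ρ) * ((L:ℝ) * V) := by
        calc ‖(ds - d₀) (d₀.adjoint v)‖ ≤ ‖ds - d₀‖ * ‖d₀.adjoint v‖ :=
              ContinuousLinearMap.le_opNorm _ _
          _ ≤ ((L':ℝ) * ρ) * ((L:ℝ) * V) := by
              apply mul_le_mul hsub ?_ (norm_nonneg _) (by positivity)
              calc ‖d₀.adjoint v‖ ≤ ‖d₀.adjoint‖ * ‖v‖ := ContinuousLinearMap.le_opNorm _ _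
                _ ≤ (L:ℝ) * V := by
                    apply mul_le_mul ?_ hvV (norm_nonneg _) L.coe_nonneg
                    rw [ContinuousLinearMap.adjoint.norm_map]
                    exact hd₀L
      have hterm3 : ‖ds (θ s - θ₀)‖ ≤ (L:ℝ) * ρ := by
        calc ‖ds (θ s - θ₀)‖ ≤ ‖ds‖ * ρ := by
              rw [hρdef]; exact ContinuousLinearMap.le_opNorm _ _
          _ ≤ (L:ℝ) * ρ := mul_le_mul_of_nonneg_right hdsL hρ0
      have hnorm_e : ‖err s‖ ≤ (4*(L:ℝ)*(L':ℝ)*V + lam*(L:ℝ)) * ρ := by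
        have h1 : ‖err s‖ ≤ 2 * ‖ds (ds.adjoint v) - d₀ (d₀.adjoint v)‖
            + lam * ‖ds (θ s - θ₀)‖ := by
          rw [herrdef]
          simp only [← hdsdef, ← hvdef]
          calc ‖-((2:ℝ) • (ds (ds.adjoint v) - d₀ (d₀.adjoint v))) - lam • (ds (θ s - θ₀))‖
              ≤ ‖(2:ℝ) • (ds (ds.adjoint v) - d₀ (d₀.adjoint v))‖ + ‖lam • (ds (θ s - θ₀))‖ := by
                rw [sub_eq_add_neg, ← neg_add]
                rw [norm_neg]
                exact norm_add_le _ _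
            _ = 2 * ‖ds (ds.adjoint v) - d₀ (d₀.adjoint v)‖ + lam * ‖ds (θ s - θ₀)‖ := by
                rw [norm_smul, norm_smul, Real.norm_eq_abs, Real.norm_eq_abs, abs_two,
                  abs_of_pos hlam]
        have h2 : ‖ds (ds.adjoint v) - d₀ (d₀.adjoint v)‖
            ≤ (L:ℝ) * ((L':ℝ) * ρ * V) + ((L':ℝ) * ρ) * ((L:ℝ) * V) := by
          rw [hsplit]
          exact le_trans (norm_add_le _ _) (add_le_add hterm1 hterm2)
        calc ‖err s‖ ≤ 2 * ((L:ℝ) * ((L':ℝ) * ρ * V) + ((L':ℝ) * ρ) * ((L:ℝ) * V))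
            + lam * ((L:ℝ) * ρ) := by
              have := mul_le_mul_of_nonneg_left h2 (by norm_num : (0:ℝ) ≤ 2)
              have := mul_le_mul_of_nonneg_left hterm3 hlam.le
              linarith
          _ = (4*(L:ℝ)*(L':ℝ)*V + lam*(L:ℝ)) * ρ := by ring
      have hρs : ρ ≤ 2*(L:ℝ)*V/lam * (1 - Real.exp (-(lam*s))) := hρdef ▸ hρ s hs
      have hfactnn : 0 ≤ 4*(L:ℝ)*(L':ℝ)*V + lam*(L:ℝ) := by positivity
      have hfact : (4*(L:ℝ)*(L':ℝ)*V + lam*(L:ℝ)) * (2*(L:ℝ)*V/lam) = bc := by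
        rw [hbdef]
        field_simp
      calc ‖err s‖ ≤ (4*(L:ℝ)*(L':ℝ)*V + lam*(L:ℝ)) * ρ := hnorm_e
        _ ≤ (4*(L:ℝ)*(L':ℝ)*V + lam*(L:ℝ)) * (2*(L:ℝ)*V/lam * (1 - Real.exp (-(lam * s)))) :=
            mul_le_mul_of_nonneg_left hρs hfactnn
        _ = bc * (1 - Real.exp (-(lam * s))) := by rw [← hfact]; ring
  -- derivative of the gap
  have hΔ : ∀ s, HasDerivAt (fun u => f (θ u) - Ybar u)
      (-((2:ℝ) • (d₀ (d₀.adjoint (f (θ s) - Ybar s)))) + err s) s := by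
    intro s
    have h := (hg s).sub (hYbar s)
    convert h using 1
    · rfl
    rw [herrdef, hd₀def]
    simp only [map_sub, map_smul, map_neg, map_add]
    module
  have hBder : ∀ s : ℝ, HasDerivAt (fun u => bc * (u - (1 - Real.exp (-(lam * u))) / lam))
      (bc * (1 - Real.exp (-(lam * s)))) s := by
    intro s
    have h1 : HasDerivAt (fun u : ℝ => -(lam * u)) (-lam) s := by
      exact (((hasDerivAt_id s).const_mul lam).neg).congr_deriv (by simp)
    have h2 : HasDerivAt (fun u => Real.exp (-(lam * u))) (Real.exp (-(lam * s)) * (-lam)) s :=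
      (Real.hasDerivAt_exp _).comp s h1
    have h3 : HasDerivAt (fun u => (1 - Real.exp (-(lam * u))) / lam)
        ((-(Real.exp (-(lam * s)) * (-lam))) / lam) s := (h2.const_sub 1).div_const lam
    have h4 := ((hasDerivAt_id s).sub h3).const_mul bc
    convert h4 using 1
    · rfl
    · rfl
    · rfl
    field_simp
  have key : ∀ ε : ℝ, 0 < ε →
      ‖f (θ t) - Ybar t‖ ≤ bc * (t - (1 - Real.exp (-(lam * t))) / lam) + ε := by
    intro ε hε
    obtain ⟨Q, hQdef⟩ : ∃ q : ℝ → ℝ,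
        q = fun u => ⟪f (θ u) - Ybar u, f (θ u) - Ybar u⟫ + ε^2 := ⟨_, rfl⟩
    have hQpos : ∀ u, 0 < Q u := by
      intro u
      simp only [hQdef, real_inner_self_eq_norm_sq]
      positivity
    have hQd : ∀ s, HasDerivAt Q
        (⟪f (θ s) - Ybar s, -((2:ℝ) • (d₀ (d₀.adjoint (f (θ s) - Ybar s)))) + err s⟫
          + ⟪-((2:ℝ) • (d₀ (d₀.adjoint (f (θ s) - Ybar s)))) + err s, f (θ s) - Ybar s⟫) s := by
      intro s
      rw [hQdef]
      exact (HasDerivAt.inner ℝ (hΔ s) (hΔ s)).add_const _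
    have hU : ∀ s, HasDerivAt (fun u => Real.sqrt (Q u))
        (1 / (2 * Real.sqrt (Q s)) *
          (⟪f (θ s) - Ybar s, -((2:ℝ) • (d₀ (d₀.adjoint (f (θ s) - Ybar s)))) + err s⟫
            + ⟪-((2:ℝ) • (d₀ (d₀.adjoint (f (θ s) - Ybar s)))) + err s, f (θ s) - Ybar s⟫)) s :=
      fun s => (Real.hasDerivAt_sqrt (hQpos s).ne').comp s (hQd s)
    have hΔle : ∀ u, ‖f (θ u) - Ybar u‖ ≤ Real.sqrt (Q u) := by
      intro u
      have h1 : ‖f (θ u) - Ybar u‖^2 ≤ Q u := by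
        simp only [hQdef, real_inner_self_eq_norm_sq]
        nlinarith [sq_nonneg ε]
      calc ‖f (θ u) - Ybar u‖ = Real.sqrt (‖f (θ u) - Ybar u‖^2) :=
            (Real.sqrt_sq (norm_nonneg _)).symm
        _ ≤ Real.sqrt (Q u) := Real.sqrt_le_sqrt h1
    obtain ⟨W, hWdef⟩ : ∃ w : ℝ → ℝ, w = fun u =>
        bc * (u - (1 - Real.exp (-(lam * u))) / lam) - Real.sqrt (Q u) := ⟨_, rfl⟩
    have hWd : ∀ s, HasDerivAt W (bc * (1 - Real.exp (-(lam * s)))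
        - 1 / (2 * Real.sqrt (Q s)) *
          (⟪f (θ s) - Ybar s, -((2:ℝ) • (d₀ (d₀.adjoint (f (θ s) - Ybar s)))) + err s⟫
            + ⟪-((2:ℝ) • (d₀ (d₀.adjoint (f (θ s) - Ybar s)))) + err s, f (θ s) - Ybar s⟫)) s := by
      intro s
      rw [hWdef]
      exact (hBder s).sub (hU s)
    have hmono : MonotoneOn W (Set.Icc (0:ℝ) t) := by
      apply monotoneOn_of_deriv_nonneg (convex_Icc 0 t)
      · exact fun s _ => (hWd s).continuousAt.continuousWithinAt
      · exact fun s _ => (hWd s).differentiableAt.differentiableWithinAt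
      · intro s hs
        rw [interior_Icc] at hs
        rw [(hWd s).deriv]
        have hsIcc : s ∈ Set.Icc (0:ℝ) t := ⟨hs.1.le, hs.2.le⟩
        have hPSD : 0 ≤ ⟪d₀ (d₀.adjoint (f (θ s) - Ybar s)), f (θ s) - Ybar s⟫ := by
          rw [← ContinuousLinearMap.adjoint_inner_right]
          exact real_inner_self_nonneg
        have hexpand : ⟪-((2:ℝ) • (d₀ (d₀.adjoint (f (θ s) - Ybar s)))) + err s, f (θ s) - Ybar s⟫
            = -(2 * ⟪d₀ (d₀.adjoint (f (θ s) - Ybar s)), f (θ s) - Ybar s⟫)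
              + ⟪err s, f (θ s) - Ybar s⟫ := by
          rw [inner_add_left, inner_neg_left, real_inner_smul_left]
        have hcomm : ⟪f (θ s) - Ybar s, -((2:ℝ) • (d₀ (d₀.adjoint (f (θ s) - Ybar s)))) + err s⟫
            = ⟪-((2:ℝ) • (d₀ (d₀.adjoint (f (θ s) - Ybar s)))) + err s, f (θ s) - Ybar s⟫ :=
          real_inner_comm _ _
        have hb1nn : 0 ≤ bc * (1 - Real.exp (-(lam * s))) :=
          mul_nonneg hb0 (hexp1 s hsIcc.1)
        have hinner_err : ⟪err s, f (θ s) - Ybar s⟫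
            ≤ bc * (1 - Real.exp (-(lam * s))) * Real.sqrt (Q s) := by
          calc ⟪err s, f (θ s) - Ybar s⟫ ≤ ‖err s‖ * ‖f (θ s) - Ybar s‖ :=
                real_inner_le_norm _ _
            _ ≤ bc * (1 - Real.exp (-(lam * s))) * Real.sqrt (Q s) :=
                mul_le_mul (hE s hsIcc) (hΔle s) (norm_nonneg _) hb1nn
        have hsq : 0 < Real.sqrt (Q s) := Real.sqrt_pos.mpr (hQpos s)
        rw [sub_nonneg, one_div, inv_mul_le_iff₀ (by positivity)]
        calc ⟪f (θ s) - Ybar s, -((2:ℝ) • (d₀ (d₀.adjoint (f (θ s) - Ybar s)))) + err s⟫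
              + ⟪-((2:ℝ) • (d₀ (d₀.adjoint (f (θ s) - Ybar s)))) + err s, f (θ s) - Ybar s⟫
            ≤ 2 * (bc * (1 - Real.exp (-(lam * s))) * Real.sqrt (Q s)) := by
              rw [hcomm, hexpand]
              linarith
          _ = 2 * Real.sqrt (Q s) * (bc * (1 - Real.exp (-(lam * s)))) := by ring
    have hQ0 : Q 0 = ε^2 := by
      simp only [hQdef, hθ₀, hY0]
      simp
    have hW0 : W 0 = -ε := by
      rw [hWdef]
      simp only []
      rw [hQ0, Real.sqrt_sq hε.le]
      simp
    have hWt := hmono (Set.left_mem_Icc.mpr ht) (Set.right_mem_Icc.mpr ht) ht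
    rw [hW0, hWdef] at hWt
    simp only [] at hWt
    have hend := hΔle t
    linarith
  have final := le_of_forall_pos_le_add key
  rw [hbdef] at final
  exact final
end

section
/- Let K be an n×n real symmetric positive semidefinite matrix, σ > 0, and Y ∈ ℝⁿ. Then the kernel ridge residual satisfies (σ·‖Y‖/(σ + λmax(K)))² ≤ ‖Y − K(K + σI)⁻¹Y‖² ≤ (σ·‖Y‖/(σ + λmin(K)))². -/
open Matrix Finset in
/-- For an `n × n` real symmetric positive semidefinite `K`, `σ > 0` and
`Y ∈ ℝⁿ`, the kernel ridge residual satisfies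
`(σ‖Y‖/(σ + λmax(K)))² ≤ ‖Y − K(K + σI)⁻¹Y‖² ≤ (σ‖Y‖/(σ + λmin(K)))²`, where
`λmax(K) = sSup (spectrum ℝ K)` and `λmin(K) = sInf (spectrum ℝ K)`. -/
theorem kernel_ridge_residual_spectral_bounds
    {n : ℕ} (hn : 0 < n) (K : Matrix (Fin n) (Fin n) ℝ) (hKsymm : K.IsSymm)
    (hK : K.PosSemidef) (σ : ℝ) (hσ : 0 < σ) (Y : EuclideanSpace ℝ (Fin n)) :
    (σ * ‖Y‖ / (σ + sSup (spectrum ℝ K))) ^ 2 ≤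
        ‖Y - Matrix.toEuclideanLin (K * (K + σ • 1)⁻¹) Y‖ ^ 2 ∧
      ‖Y - Matrix.toEuclideanLin (K * (K + σ • 1)⁻¹) Y‖ ^ 2 ≤
        (σ * ‖Y‖ / (σ + sInf (spectrum ℝ K))) ^ 2 := by
  have hA : (K + σ • 1).PosDef := by
    exact Matrix.PosDef.posSemidef_add hK (Matrix.PosDef.one.smul hσ)
  set μ : Fin n → ℝ := hK.1.eigenvalues with hμ
  set B := hK.1.eigenvectorBasis with hB
  have hμ0 : ∀ i, 0 ≤ μ i := hK.eigenvalues_nonneg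
  have hμpos : ∀ i, 0 < μ i + σ := fun i => add_pos_of_nonneg_of_pos (hμ0 i) hσ
  -- spectral facts
  have hspec : spectrum ℝ K = Set.range μ := (Matrix.IsHermitian.spectrum_real_eq_range_eigenvalues hK.1)
  set S := sSup (spectrum ℝ K) with hSdef
  set s := sInf (spectrum ℝ K) with hsdef
  have hle_S : ∀ i, μ i ≤ S := fun i => by
    rw [hSdef, hspec]
    exact le_csSup (Set.Finite.bddAbove (Set.finite_range μ)) ⟨i, rfl⟩
  have hs_le : ∀ i, s ≤ μ i := fun i => by
    rw [hsdef, hspec]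
    exact csInf_le (Set.Finite.bddBelow (Set.finite_range μ)) ⟨i, rfl⟩
  have hs0 : 0 ≤ s := by
    rw [hsdef, hspec]
    refine le_csInf ⟨μ ⟨0, hn⟩, ⟨_, rfl⟩⟩ ?_
    rintro _ ⟨i, rfl⟩; exact hμ0 i
  have hS0 : 0 ≤ S := hs0.trans ((hs_le ⟨0, hn⟩).trans (hle_S ⟨0, hn⟩))
  have hSσ : 0 < σ + S := by linarith
  have hsσ : 0 < σ + s := by linarith
  -- eigenvector computations
  have h1 : ∀ i, (K + σ • 1) *ᵥ ⇑(B i) = (μ i + σ) • ⇑(B i) := by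
    intro i
    rw [add_mulVec, smul_mulVec, one_mulVec, hK.1.mulVec_eigenvectorBasis, add_smul]
  have h2 : ∀ i, (K + σ • 1)⁻¹ *ᵥ ⇑(B i) = (μ i + σ)⁻¹ • ⇑(B i) := by
    intro i
    have := congrArg (fun v => (K + σ • 1)⁻¹ *ᵥ v) (h1 i)
    simp only [mulVec_mulVec, Matrix.nonsing_inv_mul _ hA.det_pos.ne'.isUnit,
      one_mulVec, mulVec_smul] at this
    calc (K + σ • 1)⁻¹ *ᵥ ⇑(B i)
        = (μ i + σ)⁻¹ • ((μ i + σ) • ((K + σ • 1)⁻¹ *ᵥ ⇑(B i))) := by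
          rw [smul_smul, inv_mul_cancel₀ (hμpos i).ne', one_smul]
      _ = (μ i + σ)⁻¹ • ⇑(B i) := by rw [← this]
  have h3 : ∀ i, (K * (K + σ • 1)⁻¹) *ᵥ ⇑(B i) = (μ i * (μ i + σ)⁻¹) • ⇑(B i) := by
    intro i
    rw [← mulVec_mulVec, h2, mulVec_smul, hK.1.mulVec_eigenvectorBasis, smul_smul, mul_comm]
  have h4 : ∀ i, Matrix.toEuclideanLin (K * (K + σ • 1)⁻¹) (B i)
      = (μ i * (μ i + σ)⁻¹) • (B i) := by
    intro i
    apply (WithLp.equiv 2 _).injective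
    simp only [WithLp.equiv_apply, Matrix.ofLp_toEuclideanLin_apply, WithLp.ofLp_smul]
    exact h3 i
  -- norm of coordinate sums
  have key : ∀ x : EuclideanSpace ℝ (Fin n), ‖x‖ ^ 2 = ∑ i, (B.repr x i) ^ 2 := by
    intro x
    rw [← B.repr.norm_map x, EuclideanSpace.norm_eq, Real.sq_sqrt (by positivity)]
    simp [sq_abs]
  have hnormsum : ∀ d : Fin n → ℝ, ‖∑ i, d i • B i‖ ^ 2 = ∑ i, d i ^ 2 := by
    intro d
    rw [key]
    refine Finset.sum_congr rfl fun j _ => ?_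
    have : B.repr (∑ i, d i • B i) j = d j := by
      simp only [map_sum, _root_.map_smul, B.repr_self]
      rw [WithLp.ofLp_sum, Finset.sum_apply]
      simp [EuclideanSpace.single_apply]
    rw [this]
  -- the residual
  set c : Fin n → ℝ := fun i => B.repr Y i with hc
  have hYsum : ∑ i, c i • B i = Y := B.sum_repr Y
  have hTY : Matrix.toEuclideanLin (K * (K + σ • 1)⁻¹) Y
      = ∑ i, ((μ i * (μ i + σ)⁻¹) * c i) • B i := by
    conv_lhs => rw [← hYsum]
    rw [map_sum]
    refine Finset.sum_congr rfl fun i _ => ?_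
    rw [_root_.map_smul, h4, smul_smul, mul_comm]
  have hres : Y - Matrix.toEuclideanLin (K * (K + σ • 1)⁻¹) Y
      = ∑ i, ((σ * (μ i + σ)⁻¹) * c i) • B i := by
    rw [hTY]
    conv_lhs => rw [← hYsum]
    rw [← Finset.sum_sub_distrib]
    refine Finset.sum_congr rfl fun i _ => ?_
    rw [← sub_smul]
    congr 1
    have hne : μ i + σ ≠ 0 := (hμpos i).ne'
    field_simp
    ring
  have hRnorm : ‖Y - Matrix.toEuclideanLin (K * (K + σ • 1)⁻¹) Y‖ ^ 2
      = ∑ i, ((σ * (μ i + σ)⁻¹) * c i) ^ 2 := by rw [hres, hnormsum]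
  have hYnorm : ‖Y‖ ^ 2 = ∑ i, c i ^ 2 := key Y
  constructor
  · calc (σ * ‖Y‖ / (σ + S)) ^ 2 = ∑ i, (σ / (σ + S)) ^ 2 * c i ^ 2 := by
          rw [← Finset.mul_sum, ← hYnorm]; field_simp
      _ ≤ ∑ i, ((σ * (μ i + σ)⁻¹) * c i) ^ 2 := by
          refine Finset.sum_le_sum fun i _ => ?_
          have hdiv : σ / (σ + S) ≤ σ / (μ i + σ) := by
            apply div_le_div_of_nonneg_left hσ.le (hμpos i)
            linarith [hle_S i]
          calc (σ / (σ + S)) ^ 2 * c i ^ 2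
              ≤ (σ / (μ i + σ)) ^ 2 * c i ^ 2 := by
                have := pow_le_pow_left₀ (by positivity) hdiv 2
                exact mul_le_mul_of_nonneg_right this (sq_nonneg _)
            _ = ((σ * (μ i + σ)⁻¹) * c i) ^ 2 := by rw [div_eq_mul_inv]; ring
      _ = ‖Y - Matrix.toEuclideanLin (K * (K + σ • 1)⁻¹) Y‖ ^ 2 := hRnorm.symm
  · calc ‖Y - Matrix.toEuclideanLin (K * (K + σ • 1)⁻¹) Y‖ ^ 2
        = ∑ i, ((σ * (μ i + σ)⁻¹) * c i) ^ 2 := hRnorm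
      _ ≤ ∑ i, (σ / (σ + s)) ^ 2 * c i ^ 2 := by
          refine Finset.sum_le_sum fun i _ => ?_
          have hdiv : σ / (μ i + σ) ≤ σ / (σ + s) := by
            apply div_le_div_of_nonneg_left hσ.le hsσ
            linarith [hs_le i]
          calc ((σ * (μ i + σ)⁻¹) * c i) ^ 2
              = (σ / (μ i + σ)) ^ 2 * c i ^ 2 := by rw [div_eq_mul_inv]; ring
            _ ≤ (σ / (σ + s)) ^ 2 * c i ^ 2 := by
                have := pow_le_pow_left₀ (div_nonneg hσ.le (hμpos i).le) hdiv 2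
                exact mul_le_mul_of_nonneg_right this (sq_nonneg _)
      _ = (σ * ‖Y‖ / (σ + s)) ^ 2 := by
          rw [← Finset.mul_sum, ← hYnorm]; field_simp
end

section
/- Let K be an n×n real symmetric positive definite matrix and S an n×n real symmetric positive semidefinite matrix. Let η = ‖K^{−1/2} S K^{−1/2}‖ (spectral norm), where K^{1/2} is the unique symmetric positive definite square root of K. Then for every i (eigenvalues listed in non-decreasing order with multiplicity): (1 − η)·λ_i(K) ≤ λ_i(K + S) ≤ (1 + η)·λ_i(K). -/
/-- The square root of a positive semidefinite matrix, as defined in the older Mathlib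
(removed since): `U * diagonal (√λ) * U⋆` with `U` the eigenvector unitary. -/
noncomputable def Matrix.PosSemidef.sqrt {n : Type*} [Fintype n] [DecidableEq n] {𝕜 : Type*}
    [RCLike 𝕜] [PartialOrder 𝕜] {A : Matrix n n 𝕜} (hA : A.PosSemidef) : Matrix n n 𝕜 :=
  (hA.1.eigenvectorUnitary : Matrix n n 𝕜) *
    Matrix.diagonal ((↑) ∘ Real.sqrt ∘ hA.1.eigenvalues) *
    (star (hA.1.eigenvectorUnitary : Matrix n n 𝕜))


open Matrix Finset
open scoped InnerProductSpace

variable {n : ℕ}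

lemma quad_expand {A : Matrix (Fin n) (Fin n) ℝ} (hA : A.IsHermitian) (x : EuclideanSpace ℝ (Fin n)) :
    ⟪x, Matrix.toEuclideanLin A x⟫_ℝ
      = ∑ j, hA.eigenvalues j * (⟪hA.eigenvectorBasis j, x⟫_ℝ)^2 := by
  set b := hA.eigenvectorBasis
  have hT : ∀ j, Matrix.toEuclideanLin A (b j) = hA.eigenvalues j • b j := by
    intro j
    have := hA.mulVec_eigenvectorBasis j
    apply (WithLp.equiv 2 _).injective
    simpa [Matrix.toEuclideanLin_apply] using this
  have hx : Matrix.toEuclideanLin A x = ∑ j, ⟪b j, x⟫_ℝ • (hA.eigenvalues j • b j) := by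
    conv_lhs => rw [← b.sum_repr' x]
    rw [map_sum]
    exact Finset.sum_congr rfl fun j _ => by rw [LinearMap.map_smul, hT]
  rw [hx, inner_sum]
  refine Finset.sum_congr rfl fun j _ => ?_
  rw [real_inner_smul_right, real_inner_smul_right, real_inner_comm x (b j)]
  ring

lemma norm_sq_expand {A : Matrix (Fin n) (Fin n) ℝ} (hA : A.IsHermitian) (x : EuclideanSpace ℝ (Fin n)) :
    ⟪x, x⟫_ℝ = ∑ j, (⟪hA.eigenvectorBasis j, x⟫_ℝ)^2 := by
  rw [← hA.eigenvectorBasis.sum_inner_mul_inner x x]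
  exact Finset.sum_congr rfl fun j _ => by rw [real_inner_comm x]; ring

lemma vanish_on_span {A : Matrix (Fin n) (Fin n) ℝ} (hA : A.IsHermitian)
    {s : Set (Fin n)} {j : Fin n} (hj : j ∉ s)
    {y : EuclideanSpace ℝ (Fin n)}
    (hy : y ∈ Submodule.span ℝ (hA.eigenvectorBasis '' s)) :
    ⟪hA.eigenvectorBasis j, y⟫_ℝ = 0 := by
  induction hy using Submodule.span_induction with
  | mem z hz =>
      obtain ⟨m, hm, rfl⟩ := hz
      exact hA.eigenvectorBasis.orthonormal.2 (fun h => hj (h ▸ hm))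
  | zero => simp
  | add z w _ _ hz hw => rw [inner_add_right, hz, hw, add_zero]
  | smul c z _ hz => rw [inner_smul_right, hz, mul_zero]

lemma eig_le_of_quad_le {A B : Matrix (Fin n) (Fin n) ℝ} (hA : A.IsHermitian)
    (hB : B.IsHermitian) {c : ℝ} (hc : 0 ≤ c)
    (h : ∀ x : EuclideanSpace ℝ (Fin n),
      c * ⟪x, Matrix.toEuclideanLin A x⟫_ℝ ≤ ⟪x, Matrix.toEuclideanLin B x⟫_ℝ)
    (i : Fin n) :
    c * (hA.eigenvalues ∘ Tuple.sort hA.eigenvalues) i ≤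
      (hB.eigenvalues ∘ Tuple.sort hB.eigenvalues) i := by
  classical
  set σ := Tuple.sort hA.eigenvalues with hσ
  set τ := Tuple.sort hB.eigenvalues with hτ
  set bA := hA.eigenvectorBasis
  set bB := hB.eigenvectorBasis
  set U : Submodule ℝ (EuclideanSpace ℝ (Fin n)) :=
    Submodule.span ℝ (bA '' (σ '' Set.Ici i))
  set V : Submodule ℝ (EuclideanSpace ℝ (Fin n)) :=
    Submodule.span ℝ (bB '' (τ '' Set.Iic i))
  have hranU : Set.range (fun k : Set.Ici i => bA (σ k.1)) = bA '' (σ '' Set.Ici i) := by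
    rw [show (fun k : Set.Ici i => bA (σ k.1)) = (bA ∘ σ) ∘ (Subtype.val : Set.Ici i → Fin n)
      from rfl, Set.range_comp, Subtype.range_coe, Set.image_comp]
  have hranV : Set.range (fun k : Set.Iic i => bB (τ k.1)) = bB '' (τ '' Set.Iic i) := by
    rw [show (fun k : Set.Iic i => bB (τ k.1)) = (bB ∘ τ) ∘ (Subtype.val : Set.Iic i → Fin n)
      from rfl, Set.range_comp, Subtype.range_coe, Set.image_comp]
  have honU : Orthonormal ℝ (fun k : Set.Ici i => bA (σ k.1)) :=
    bA.orthonormal.comp _ (σ.injective.comp Subtype.val_injective)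
  have honV : Orthonormal ℝ (fun k : Set.Iic i => bB (τ k.1)) :=
    bB.orthonormal.comp _ (τ.injective.comp Subtype.val_injective)
  have hU : Module.finrank ℝ U = n - i.1 := by
    rw [show U = Submodule.span ℝ (Set.range fun k : Set.Ici i => bA (σ k.1)) by rw [hranU]]
    rw [finrank_span_eq_card honU.linearIndependent, Fintype.card_Ici, Fin.card_Ici]
  have hV : Module.finrank ℝ V = i.1 + 1 := by
    rw [show V = Submodule.span ℝ (Set.range fun k : Set.Iic i => bB (τ k.1)) by rw [hranV]]
    rw [finrank_span_eq_card honV.linearIndependent, Fintype.card_Iic, Fin.card_Iic]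
  have hsum := Submodule.finrank_sup_add_finrank_inf_eq U V
  have hle : Module.finrank ℝ (U ⊔ V : Submodule ℝ (EuclideanSpace ℝ (Fin n))) ≤ n := by
    simpa using (Submodule.finrank_le (U ⊔ V)).trans_eq (finrank_euclideanSpace (𝕜 := ℝ) (ι := Fin n)) |>.trans_eq (by simp)
  have hpos : 0 < Module.finrank ℝ (U ⊓ V : Submodule ℝ (EuclideanSpace ℝ (Fin n))) := by
    have hi := i.isLt
    omega
  obtain ⟨x, hx0⟩ := Module.finrank_pos_iff_exists_ne_zero.mp hpos
  set y : EuclideanSpace ℝ (Fin n) := (x : EuclideanSpace ℝ (Fin n))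
  have hyU : y ∈ U := x.2.1
  have hyV : y ∈ V := x.2.2
  have hy0 : ‖y‖ ≠ 0 := by
    simp only [norm_ne_zero_iff]
    exact fun h => hx0 (Subtype.ext h)
  have claimA : (hA.eigenvalues ∘ σ) i * ⟪y, y⟫_ℝ ≤ ⟪y, Matrix.toEuclideanLin A y⟫_ℝ := by
    rw [quad_expand hA y, norm_sq_expand hA y, Finset.mul_sum]
    refine Finset.sum_le_sum fun j _ => ?_
    by_cases hcase : i ≤ σ.symm j
    · have hmono : (hA.eigenvalues ∘ σ) i ≤ hA.eigenvalues j := by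
        have := Tuple.monotone_sort hA.eigenvalues hcase
        simpa [hσ] using this
      exact mul_le_mul_of_nonneg_right hmono (sq_nonneg _)
    · have hj : j ∉ σ '' Set.Ici i := by
        rintro ⟨m, hm, rfl⟩
        exact hcase (by simpa using hm)
      rw [vanish_on_span hA hj hyU]
      simp
  have claimB : ⟪y, Matrix.toEuclideanLin B y⟫_ℝ ≤ (hB.eigenvalues ∘ τ) i * ⟪y, y⟫_ℝ := by
    rw [quad_expand hB y, norm_sq_expand hB y, Finset.mul_sum]
    refine Finset.sum_le_sum fun j _ => ?_
    by_cases hcase : τ.symm j ≤ i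
    · have hmono : hB.eigenvalues j ≤ (hB.eigenvalues ∘ τ) i := by
        have := Tuple.monotone_sort hB.eigenvalues hcase
        simpa [hτ] using this
      exact mul_le_mul_of_nonneg_right hmono (sq_nonneg _)
    · have hj : j ∉ τ '' Set.Iic i := by
        rintro ⟨m, hm, rfl⟩
        exact hcase (by simpa using hm)
      rw [vanish_on_span hB hj hyV]
      simp
  have hyy : (0:ℝ) < ⟪y, y⟫_ℝ := by rw [real_inner_self_eq_norm_sq]; positivity
  have hchain : (c * (hA.eigenvalues ∘ σ) i) * ⟪y, y⟫_ℝ ≤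
      ((hB.eigenvalues ∘ τ) i) * ⟪y, y⟫_ℝ := by
    calc (c * (hA.eigenvalues ∘ σ) i) * ⟪y, y⟫_ℝ
        = c * ((hA.eigenvalues ∘ σ) i * ⟪y, y⟫_ℝ) := by ring
      _ ≤ c * ⟪y, Matrix.toEuclideanLin A y⟫_ℝ := mul_le_mul_of_nonneg_left claimA hc
      _ ≤ ⟪y, Matrix.toEuclideanLin B y⟫_ℝ := h y
      _ ≤ ((hB.eigenvalues ∘ τ) i) * ⟪y, y⟫_ℝ := claimB
  exact le_of_mul_le_mul_right hchain hyy

lemma inner_toEuclideanLin_eq (M : Matrix (Fin n) (Fin n) ℝ) (x : EuclideanSpace ℝ (Fin n)) :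
    ⟪x, Matrix.toEuclideanLin M x⟫_ℝ = (WithLp.equiv 2 _ x) ⬝ᵥ (M *ᵥ WithLp.equiv 2 _ x) := by
  simp [Matrix.toEuclideanLin_apply, PiLp.inner_apply, dotProduct, RCLike.inner_apply,
    mul_comm]

lemma sqrt_transpose' {n : ℕ} {K : Matrix (Fin n) (Fin n) ℝ} (hK : K.PosSemidef) :
    (hK.sqrt)ᵀ = hK.sqrt := by
  unfold Matrix.PosSemidef.sqrt
  rw [← Matrix.conjTranspose_eq_transpose_of_trivial]
  simp [Matrix.conjTranspose_mul, Matrix.diagonal_conjTranspose, Matrix.star_eq_conjTranspose,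
    Matrix.mul_assoc]

lemma sqrt_mul_self' {n : ℕ} {K : Matrix (Fin n) (Fin n) ℝ} (hK : K.PosSemidef) :
    hK.sqrt * hK.sqrt = K := by
  unfold Matrix.PosSemidef.sqrt
  set U : Matrix (Fin n) (Fin n) ℝ := (hK.1.eigenvectorUnitary : Matrix (Fin n) (Fin n) ℝ) with hUdef
  have hU : star U * U = 1 := Unitary.coe_star_mul_self _
  have hD : Matrix.diagonal (((↑) : ℝ → ℝ) ∘ Real.sqrt ∘ hK.1.eigenvalues) *
      Matrix.diagonal (((↑) : ℝ → ℝ) ∘ Real.sqrt ∘ hK.1.eigenvalues) =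
      Matrix.diagonal (RCLike.ofReal ∘ hK.1.eigenvalues) := by
    rw [Matrix.diagonal_mul_diagonal]
    congr 1
    funext j
    simp [Real.mul_self_sqrt (hK.eigenvalues_nonneg j)]
  calc U * Matrix.diagonal (((↑) : ℝ → ℝ) ∘ Real.sqrt ∘ hK.1.eigenvalues) * star U *
        (U * Matrix.diagonal (((↑) : ℝ → ℝ) ∘ Real.sqrt ∘ hK.1.eigenvalues) * star U)
      = U * (Matrix.diagonal (((↑) : ℝ → ℝ) ∘ Real.sqrt ∘ hK.1.eigenvalues) * (star U * U) *
        Matrix.diagonal (((↑) : ℝ → ℝ) ∘ Real.sqrt ∘ hK.1.eigenvalues)) * star U := by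
          simp only [Matrix.mul_assoc]
    _ = K := by
      rw [hU, Matrix.mul_one, hD]
      conv_rhs => rw [hK.1.spectral_theorem]
      simp [hUdef]

lemma key_quad {K S : Matrix (Fin n) (Fin n) ℝ} (hK : K.PosDef) (hS : S.PosSemidef)
    (z : Fin n → ℝ) :
    z ⬝ᵥ S *ᵥ z ≤ ‖Matrix.toEuclideanCLM (𝕜 := ℝ)
        ((hK.posSemidef.sqrt)⁻¹ * S * (hK.posSemidef.sqrt)⁻¹)‖ * (z ⬝ᵥ K *ᵥ z) := by
  classical
  set R := hK.posSemidef.sqrt with hR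
  set M := R⁻¹ * S * R⁻¹ with hM
  have hRsymm : Rᵀ = R := sqrt_transpose' hK.posSemidef
  have hdet : R.det ≠ 0 := by
    intro h
    have h2 : K.det = R.det * R.det := by
      rw [← Matrix.det_mul, sqrt_mul_self' hK.posSemidef]
    have := hK.det_pos
    rw [h2, h, mul_zero] at this
    exact lt_irrefl _ this
  have hRinv_symm : (R⁻¹)ᵀ = R⁻¹ := by rw [Matrix.transpose_nonsing_inv, hRsymm]
  set y : Fin n → ℝ := R *ᵥ z with hy
  have hz : R⁻¹ *ᵥ y = z := by
    rw [hy, Matrix.mulVec_mulVec, Matrix.nonsing_inv_mul _ (isUnit_iff_ne_zero.mpr hdet), Matrix.one_mulVec]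
  have h1 : y ⬝ᵥ M *ᵥ y = z ⬝ᵥ S *ᵥ z := by
    rw [hM, ← Matrix.mulVec_mulVec, ← Matrix.mulVec_mulVec, hz,
      Matrix.dotProduct_mulVec y R⁻¹, ← Matrix.mulVec_transpose, hRinv_symm, hz]
  have h2 : y ⬝ᵥ y = z ⬝ᵥ K *ᵥ z := by
    rw [hy, Matrix.dotProduct_mulVec, ← Matrix.mulVec_transpose, hRsymm,
      Matrix.mulVec_mulVec, sqrt_mul_self' hK.posSemidef, dotProduct_comm]
  set y' : EuclideanSpace ℝ (Fin n) := (WithLp.equiv 2 _).symm y with hy'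
  have h3 : y ⬝ᵥ M *ᵥ y = ⟪y', Matrix.toEuclideanCLM (𝕜 := ℝ) M y'⟫_ℝ := by
    have := inner_toEuclideanLin_eq M y'
    rw [show (Matrix.toEuclideanCLM (𝕜 := ℝ) M : EuclideanSpace ℝ (Fin n) → _) =
      Matrix.toEuclideanLin M from funext fun w =>
        congrFun (congrArg DFunLike.coe (Matrix.coe_toEuclideanCLM_eq_toEuclideanLin M)) w]
    rw [this, (WithLp.equiv 2 _).apply_symm_apply]
  have h4 : ⟪y', Matrix.toEuclideanCLM (𝕜 := ℝ) M y'⟫_ℝ ≤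
      ‖Matrix.toEuclideanCLM (𝕜 := ℝ) M‖ * (y ⬝ᵥ y) := by
    calc ⟪y', Matrix.toEuclideanCLM (𝕜 := ℝ) M y'⟫_ℝ
        ≤ ‖y'‖ * ‖Matrix.toEuclideanCLM (𝕜 := ℝ) M y'‖ := real_inner_le_norm _ _
      _ ≤ ‖y'‖ * (‖Matrix.toEuclideanCLM (𝕜 := ℝ) M‖ * ‖y'‖) := by
          exact mul_le_mul_of_nonneg_left ((Matrix.toEuclideanCLM (𝕜 := ℝ) M).le_opNorm y')
            (norm_nonneg _)
      _ = ‖Matrix.toEuclideanCLM (𝕜 := ℝ) M‖ * (‖y'‖ * ‖y'‖) := by ring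
      _ = ‖Matrix.toEuclideanCLM (𝕜 := ℝ) M‖ * (y ⬝ᵥ y) := by
          rw [← real_inner_self_eq_norm_mul_norm]
          congr 1
  rw [← h1, ← h2, h3]
  exact h4

/-- For an `n × n` real symmetric positive definite `K` and symmetric
positive semidefinite `S`, with `η = ‖K^{−1/2} S K^{−1/2}‖` (spectral norm, `K^{1/2}`
the unique positive semidefinite square root of `K`), the eigenvalues listed in
non-decreasing order with multiplicity satisfy
`(1 − η) λᵢ(K) ≤ λᵢ(K + S) ≤ (1 + η) λᵢ(K)` for every `i`. -/
theorem spectral_perturbation_eigenvalue_bounds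
    {n : ℕ} (K S : Matrix (Fin n) (Fin n) ℝ)
    (hKsymm : K.IsSymm) (hSsymm : S.IsSymm)
    (hK : K.PosDef) (hS : S.PosSemidef) :
    ∀ i : Fin n,
      (1 - ‖Matrix.toEuclideanCLM (𝕜 := ℝ)
            ((hK.posSemidef.sqrt)⁻¹ * S * (hK.posSemidef.sqrt)⁻¹)‖) *
          (hK.1.eigenvalues ∘ Tuple.sort hK.1.eigenvalues) i ≤
        ((hK.1.add hS.1).eigenvalues ∘ Tuple.sort (hK.1.add hS.1).eigenvalues) i ∧
      ((hK.1.add hS.1).eigenvalues ∘ Tuple.sort (hK.1.add hS.1).eigenvalues) i ≤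
        (1 + ‖Matrix.toEuclideanCLM (𝕜 := ℝ)
            ((hK.posSemidef.sqrt)⁻¹ * S * (hK.posSemidef.sqrt)⁻¹)‖) *
          (hK.1.eigenvalues ∘ Tuple.sort hK.1.eigenvalues) i := by
  intro i
  set η : ℝ := ‖Matrix.toEuclideanCLM (𝕜 := ℝ)
      ((hK.posSemidef.sqrt)⁻¹ * S * (hK.posSemidef.sqrt)⁻¹)‖ with hη
  have hη0 : 0 ≤ η := norm_nonneg _
  have hqS : ∀ x : EuclideanSpace ℝ (Fin n), 0 ≤ ⟪x, Matrix.toEuclideanLin S x⟫_ℝ := by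
    intro x
    rw [inner_toEuclideanLin_eq]
    simpa using hS.dotProduct_mulVec_nonneg (WithLp.equiv 2 _ x)
  have hqK : ∀ x : EuclideanSpace ℝ (Fin n), 0 ≤ ⟪x, Matrix.toEuclideanLin K x⟫_ℝ := by
    intro x
    rw [inner_toEuclideanLin_eq]
    simpa using hK.posSemidef.dotProduct_mulVec_nonneg (WithLp.equiv 2 _ x)
  have hkey : ∀ x : EuclideanSpace ℝ (Fin n),
      ⟪x, Matrix.toEuclideanLin S x⟫_ℝ ≤ η * ⟪x, Matrix.toEuclideanLin K x⟫_ℝ := by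
    intro x
    rw [inner_toEuclideanLin_eq, inner_toEuclideanLin_eq]
    exact key_quad hK hS _
  have hsum : ∀ x : EuclideanSpace ℝ (Fin n),
      ⟪x, Matrix.toEuclideanLin (K + S) x⟫_ℝ =
        ⟪x, Matrix.toEuclideanLin K x⟫_ℝ + ⟪x, Matrix.toEuclideanLin S x⟫_ℝ := by
    intro x
    rw [map_add, LinearMap.add_apply, inner_add_right]
  constructor
  · rcases le_or_gt 0 (1 - η) with hc | hc
    · refine eig_le_of_quad_le hK.1 (hK.1.add hS.1) hc (fun x => ?_) i
      rw [hsum x]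
      nlinarith [hqS x, hqK x]
    · have h1 : 0 ≤ ((hK.1.add hS.1).eigenvalues ∘ Tuple.sort (hK.1.add hS.1).eigenvalues) i :=
        (hK.posSemidef.add hS).eigenvalues_nonneg _
      have h2 : 0 < (hK.1.eigenvalues ∘ Tuple.sort hK.1.eigenvalues) i :=
        hK.eigenvalues_pos _
      nlinarith
  · have h1 : (0:ℝ) < 1 + η := by linarith
    have h2 := eig_le_of_quad_le (hK.1.add hS.1) hK.1 (c := (1 + η)⁻¹)
      (by positivity) (fun x => ?_) i
    · rw [inv_mul_le_iff₀ h1] at h2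
      exact h2
    · rw [hsum x, inv_mul_le_iff₀ h1]
      nlinarith [hkey x, hqK x]
end

section
/- Let K be an n×n real symmetric positive definite matrix, S₁ and S₂ n×n real symmetric positive semidefinite matrices, σ > 0, Y ∈ ℝⁿ with Y ≠ 0, and suppose κ(K + σI) = (λmax(K) + σ)/(λmin(K) + σ) ≤ c. For l ∈ {1,2}, let η_l = ‖K^{−1/2} S_l K^{−1/2}‖ (spectral norm), assume η_l < 1, and set a_l = c/(1 − η_l)² and b = a₁·a₂. Then, writing R(A) = ‖Y − A(A + σI)⁻¹Y‖² for the kernel ridge residual: λmax(K + S₁ + σI)/(b·λmax(K + S₂ + σI)) ≤ (R(K + S₁)/R(K + S₂))^{1/2} ≤ b·λmax(K + S₁ + σI)/λmax(K + S₂ + σI). -/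
open Matrix
open scoped MatrixOrder
open scoped RealInnerProductSpace

variable {n : ℕ}

local notation "E" => EuclideanSpace ℝ (Fin n)

lemma tEL_apply (A : Matrix (Fin n) (Fin n) ℝ) (x : E) (j : Fin n) :
    Matrix.toEuclideanLin A x j = (A *ᵥ ⇑x) j := rfl

lemma tEL_mul (A B : Matrix (Fin n) (Fin n) ℝ) (x : E) :
    Matrix.toEuclideanLin (A * B) x = Matrix.toEuclideanLin A (Matrix.toEuclideanLin B x) := by
  ext j
  simp [tEL_apply, mulVec_mulVec]

lemma tEL_one (x : E) : Matrix.toEuclideanLin (1 : Matrix (Fin n) (Fin n) ℝ) x = x := by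
  ext j; simp [tEL_apply]

lemma tEL_eig {A : Matrix (Fin n) (Fin n) ℝ} (hA : A.IsHermitian) (i : Fin n) :
    Matrix.toEuclideanLin A (hA.eigenvectorBasis i) =
      hA.eigenvalues i • hA.eigenvectorBasis i := by
  ext j
  have := congrFun (hA.mulVec_eigenvectorBasis i) j
  simpa [tEL_apply] using this

lemma inner_tEL_eig {A : Matrix (Fin n) (Fin n) ℝ} (hA : A.IsHermitian) (x : E) (i : Fin n) :
    ⟪(hA.eigenvectorBasis i : E), Matrix.toEuclideanLin A x⟫ =
      hA.eigenvalues i * ⟪(hA.eigenvectorBasis i : E), x⟫ := by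
  have hsymm : (Matrix.toEuclideanLin A).IsSymmetric :=
    (Matrix.isHermitian_iff_isSymmetric).1 hA
  rw [← hsymm (hA.eigenvectorBasis i) x, tEL_eig hA i, inner_smul_left]
  simp

lemma quad_sum {A : Matrix (Fin n) (Fin n) ℝ} (hA : A.IsHermitian) (x : E) :
    ⟪x, Matrix.toEuclideanLin A x⟫ =
      ∑ i, hA.eigenvalues i * ⟪(hA.eigenvectorBasis i : E), x⟫ ^ 2 := by
  rw [← OrthonormalBasis.sum_inner_mul_inner hA.eigenvectorBasis x
    (Matrix.toEuclideanLin A x)]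
  refine Finset.sum_congr rfl fun i _ => ?_
  rw [inner_tEL_eig hA x i, real_inner_comm x]
  ring

lemma norm_sq_sum {A : Matrix (Fin n) (Fin n) ℝ} (hA : A.IsHermitian) (x : E) :
    ‖x‖ ^ 2 = ∑ i, ⟪(hA.eigenvectorBasis i : E), x⟫ ^ 2 := by
  rw [← real_inner_self_eq_norm_sq,
    ← OrthonormalBasis.sum_inner_mul_inner hA.eigenvectorBasis x x]
  refine Finset.sum_congr rfl fun i _ => ?_
  rw [real_inner_comm x]; ring

lemma norm_tEL_sq_sum {A : Matrix (Fin n) (Fin n) ℝ} (hA : A.IsHermitian) (x : E) :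
    ‖Matrix.toEuclideanLin A x‖ ^ 2 =
      ∑ i, (hA.eigenvalues i) ^ 2 * ⟪(hA.eigenvectorBasis i : E), x⟫ ^ 2 := by
  rw [norm_sq_sum hA]
  refine Finset.sum_congr rfl fun i _ => ?_
  rw [inner_tEL_eig hA x i]; ring

lemma lmax_mem (hn : 0 < n) {A : Matrix (Fin n) (Fin n) ℝ} (hA : A.IsHermitian) :
    sSup (spectrum ℝ A) ∈ spectrum ℝ A := by
  haveI : Nonempty (Fin n) := ⟨⟨0, hn⟩⟩
  rw [hA.spectrum_real_eq_range_eigenvalues]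
  exact (Set.range_nonempty _).csSup_mem (Set.finite_range _)

lemma lmin_mem (hn : 0 < n) {A : Matrix (Fin n) (Fin n) ℝ} (hA : A.IsHermitian) :
    sInf (spectrum ℝ A) ∈ spectrum ℝ A := by
  haveI : Nonempty (Fin n) := ⟨⟨0, hn⟩⟩
  rw [hA.spectrum_real_eq_range_eigenvalues]
  exact (Set.range_nonempty _).csInf_mem (Set.finite_range _)

lemma eig_le_lmax {A : Matrix (Fin n) (Fin n) ℝ} (hA : A.IsHermitian) (i : Fin n) :
    hA.eigenvalues i ≤ sSup (spectrum ℝ A) := by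
  rw [hA.spectrum_real_eq_range_eigenvalues]
  exact le_csSup (Set.finite_range _).bddAbove ⟨i, rfl⟩

lemma lmin_le_eig {A : Matrix (Fin n) (Fin n) ℝ} (hA : A.IsHermitian) (i : Fin n) :
    sInf (spectrum ℝ A) ≤ hA.eigenvalues i := by
  rw [hA.spectrum_real_eq_range_eigenvalues]
  exact csInf_le (Set.finite_range _).bddBelow ⟨i, rfl⟩

lemma quad_le_lmax {A : Matrix (Fin n) (Fin n) ℝ} (hA : A.IsHermitian) (x : E) :
    ⟪x, Matrix.toEuclideanLin A x⟫ ≤ sSup (spectrum ℝ A) * ‖x‖ ^ 2 := by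
  rw [quad_sum hA, norm_sq_sum hA, Finset.mul_sum]
  exact Finset.sum_le_sum fun i _ =>
    mul_le_mul_of_nonneg_right (eig_le_lmax hA i) (sq_nonneg _)

lemma lmin_le_quad {A : Matrix (Fin n) (Fin n) ℝ} (hA : A.IsHermitian) (x : E) :
    sInf (spectrum ℝ A) * ‖x‖ ^ 2 ≤ ⟪x, Matrix.toEuclideanLin A x⟫ := by
  rw [quad_sum hA, norm_sq_sum hA, Finset.mul_sum]
  exact Finset.sum_le_sum fun i _ =>
    mul_le_mul_of_nonneg_right (lmin_le_eig hA i) (sq_nonneg _)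

lemma exists_unit_eigen {A : Matrix (Fin n) (Fin n) ℝ} (hA : A.IsHermitian) {μ : ℝ}
    (hμ : μ ∈ spectrum ℝ A) :
    ∃ v : E, ‖v‖ = 1 ∧ Matrix.toEuclideanLin A v = μ • v := by
  rw [hA.spectrum_real_eq_range_eigenvalues] at hμ
  obtain ⟨i, rfl⟩ := hμ
  exact ⟨hA.eigenvectorBasis i, hA.eigenvectorBasis.orthonormal.1 i, tEL_eig hA i⟩

lemma lmax_le (hn : 0 < n) {A : Matrix (Fin n) (Fin n) ℝ} (hA : A.IsHermitian) {r : ℝ}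
    (h : ∀ x : E, ‖x‖ = 1 → ⟪x, Matrix.toEuclideanLin A x⟫ ≤ r) :
    sSup (spectrum ℝ A) ≤ r := by
  obtain ⟨v, hv1, hv⟩ := exists_unit_eigen hA (lmax_mem hn hA)
  have := h v hv1
  rw [hv, real_inner_smul_right, real_inner_self_eq_norm_sq, hv1] at this
  simpa using this

lemma le_lmin (hn : 0 < n) {A : Matrix (Fin n) (Fin n) ℝ} (hA : A.IsHermitian) {r : ℝ}
    (h : ∀ x : E, ‖x‖ = 1 → r ≤ ⟪x, Matrix.toEuclideanLin A x⟫) :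
    r ≤ sInf (spectrum ℝ A) := by
  obtain ⟨v, hv1, hv⟩ := exists_unit_eigen hA (lmin_mem hn hA)
  have := h v hv1
  rw [hv, real_inner_smul_right, real_inner_self_eq_norm_sq, hv1] at this
  simpa using this

lemma lmin_le_lmax (hn : 0 < n) {A : Matrix (Fin n) (Fin n) ℝ} (hA : A.IsHermitian) :
    sInf (spectrum ℝ A) ≤ sSup (spectrum ℝ A) := by
  haveI : Nonempty (Fin n) := ⟨⟨0, hn⟩⟩
  have h := hA.spectrum_real_eq_range_eigenvalues
  calc sInf (spectrum ℝ A) ≤ hA.eigenvalues ⟨0, hn⟩ := lmin_le_eig hA _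
    _ ≤ sSup (spectrum ℝ A) := eig_le_lmax hA _

lemma herm_smul_one (σ : ℝ) : (σ • (1 : Matrix (Fin n) (Fin n) ℝ)).IsHermitian := by
  simp [Matrix.IsHermitian]

lemma quad_nonneg {M : Matrix (Fin n) (Fin n) ℝ} (hM : M.PosSemidef) (x : E) :
    0 ≤ ⟪x, Matrix.toEuclideanLin M x⟫ := by
  have h := hM.dotProduct_mulVec_nonneg (⇑x)
  simpa [dotProduct, PiLp.inner_apply, tEL_apply, mul_comm] using h

lemma quad_smul_one (σ : ℝ) (x : E) :
    ⟪x, Matrix.toEuclideanLin (σ • (1 : Matrix (Fin n) (Fin n) ℝ)) x⟫ = σ * ‖x‖ ^ 2 := by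
  rw [_root_.map_smul]
  simp only [LinearMap.smul_apply, real_inner_smul_right, tEL_one]
  rw [real_inner_self_eq_norm_sq]

lemma quad_add {M N : Matrix (Fin n) (Fin n) ℝ} (x : E) :
    ⟪x, Matrix.toEuclideanLin (M + N) x⟫ =
      ⟪x, Matrix.toEuclideanLin M x⟫ + ⟪x, Matrix.toEuclideanLin N x⟫ := by
  rw [map_add]
  simp [inner_add_right]

lemma lmax_shift (hn : 0 < n) {A : Matrix (Fin n) (Fin n) ℝ} (hA : A.IsHermitian) (σ : ℝ) :
    sSup (spectrum ℝ (A + σ • 1)) = sSup (spectrum ℝ A) + σ := by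
  have hA' : (A + σ • 1).IsHermitian := hA.add (herm_smul_one σ)
  apply le_antisymm
  · apply lmax_le hn hA'
    intro x hx
    rw [quad_add (M := A) (N := σ • 1), quad_smul_one, hx]
    have := quad_le_lmax hA x
    rw [hx] at this
    simpa using add_le_add_right (by simpa using this) σ
  · obtain ⟨v, hv1, hv⟩ := exists_unit_eigen hA (lmax_mem hn hA)
    have h1 : ⟪v, Matrix.toEuclideanLin (A + σ • 1) v⟫ = sSup (spectrum ℝ A) + σ := by
      rw [quad_add (M := A) (N := σ • 1), quad_smul_one, hv, real_inner_smul_right,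
        real_inner_self_eq_norm_sq, hv1]
      ring
    have h2 := quad_le_lmax hA' v
    rw [h1, hv1] at h2
    simpa using h2

lemma lmin_shift (hn : 0 < n) {A : Matrix (Fin n) (Fin n) ℝ} (hA : A.IsHermitian) (σ : ℝ) :
    sInf (spectrum ℝ (A + σ • 1)) = sInf (spectrum ℝ A) + σ := by
  have hA' : (A + σ • 1).IsHermitian := hA.add (herm_smul_one σ)
  apply le_antisymm
  · obtain ⟨v, hv1, hv⟩ := exists_unit_eigen hA (lmin_mem hn hA)
    have h1 : ⟪v, Matrix.toEuclideanLin (A + σ • 1) v⟫ = sInf (spectrum ℝ A) + σ := by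
      rw [quad_add (M := A) (N := σ • 1), quad_smul_one, hv, real_inner_smul_right,
        real_inner_self_eq_norm_sq, hv1]
      ring
    have h2 := lmin_le_quad hA' v
    rw [h1, hv1] at h2
    simpa using h2
  · apply le_lmin hn hA'
    intro x hx
    rw [quad_add (M := A) (N := σ • 1), quad_smul_one, hx]
    have := lmin_le_quad hA x
    rw [hx] at this
    simpa using add_le_add_right (by simpa using this) σ

lemma lmin_pos (hn : 0 < n) {A : Matrix (Fin n) (Fin n) ℝ} (hA : A.PosDef) :
    0 < sInf (spectrum ℝ A) := by
  obtain ⟨i, hi⟩ := (hA.1.spectrum_real_eq_range_eigenvalues ▸ lmin_mem hn hA.1 :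
    sInf (spectrum ℝ A) ∈ Set.range hA.1.eigenvalues)
  exact hi ▸ hA.eigenvalues_pos i

lemma lmax_pos (hn : 0 < n) {A : Matrix (Fin n) (Fin n) ℝ} (hA : A.PosDef) :
    0 < sSup (spectrum ℝ A) :=
  lt_of_lt_of_le (lmin_pos hn hA) (lmin_le_lmax hn hA.1)

lemma norm_tEL_le (hn : 0 < n) {A : Matrix (Fin n) (Fin n) ℝ} (hA : A.PosDef) (x : E) :
    ‖Matrix.toEuclideanLin A x‖ ≤ sSup (spectrum ℝ A) * ‖x‖ := by
  have hm : 0 < sSup (spectrum ℝ A) := lmax_pos hn hA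
  have hsq : ‖Matrix.toEuclideanLin A x‖ ^ 2 ≤ (sSup (spectrum ℝ A) * ‖x‖) ^ 2 := by
    rw [norm_tEL_sq_sum hA.1, mul_pow, norm_sq_sum hA.1 x, Finset.mul_sum]
    refine Finset.sum_le_sum fun i _ => ?_
    refine mul_le_mul_of_nonneg_right ?_ (sq_nonneg _)
    have h1 : 0 < hA.1.eigenvalues i := hA.eigenvalues_pos i
    have h2 : hA.1.eigenvalues i ≤ sSup (spectrum ℝ A) := eig_le_lmax hA.1 i
    nlinarith
  calc ‖Matrix.toEuclideanLin A x‖ = √(‖Matrix.toEuclideanLin A x‖ ^ 2) := by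
        rw [Real.sqrt_sq (norm_nonneg _)]
    _ ≤ √((sSup (spectrum ℝ A) * ‖x‖) ^ 2) := Real.sqrt_le_sqrt hsq
    _ = sSup (spectrum ℝ A) * ‖x‖ := Real.sqrt_sq (by positivity)

lemma le_norm_tEL (hn : 0 < n) {A : Matrix (Fin n) (Fin n) ℝ} (hA : A.PosDef) (x : E) :
    sInf (spectrum ℝ A) * ‖x‖ ≤ ‖Matrix.toEuclideanLin A x‖ := by
  have hm : 0 < sInf (spectrum ℝ A) := lmin_pos hn hA
  have hsq : (sInf (spectrum ℝ A) * ‖x‖) ^ 2 ≤ ‖Matrix.toEuclideanLin A x‖ ^ 2 := by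
    rw [norm_tEL_sq_sum hA.1, mul_pow, norm_sq_sum hA.1 x, Finset.mul_sum]
    refine Finset.sum_le_sum fun i _ => ?_
    refine mul_le_mul_of_nonneg_right ?_ (sq_nonneg _)
    have h1 : 0 < hA.1.eigenvalues i := hA.eigenvalues_pos i
    have h2 : sInf (spectrum ℝ A) ≤ hA.1.eigenvalues i := lmin_le_eig hA.1 i
    nlinarith
  calc sInf (spectrum ℝ A) * ‖x‖ = √((sInf (spectrum ℝ A) * ‖x‖) ^ 2) := by
        rw [Real.sqrt_sq (by positivity)]
    _ ≤ √(‖Matrix.toEuclideanLin A x‖ ^ 2) := Real.sqrt_le_sqrt hsq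
    _ = ‖Matrix.toEuclideanLin A x‖ := Real.sqrt_sq (norm_nonneg _)

lemma quad_S_le {K S : Matrix (Fin n) (Fin n) ℝ} (hK : K.PosDef) (hS : S.PosSemidef) (x : E) :
    ⟪x, Matrix.toEuclideanLin S x⟫ ≤
      ‖Matrix.toEuclideanCLM (𝕜 := ℝ) ((CFC.sqrt K)⁻¹ * S * (CFC.sqrt K)⁻¹)‖ *
        ⟪x, Matrix.toEuclideanLin K x⟫ := by
  set Q := CFC.sqrt K with hQdef
  have hQpsd : Q.PosSemidef := Matrix.nonneg_iff_posSemidef.1 (CFC.sqrt_nonneg K)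
  have hQQ : Q * Q = K := CFC.sqrt_mul_sqrt_self K (Matrix.nonneg_iff_posSemidef.2 hK.posSemidef)
  have hdet : IsUnit Q.det := by
    refine isUnit_iff_ne_zero.2 fun h => ?_
    have : Q.det * Q.det = K.det := by rw [← Matrix.det_mul, hQQ]
    rw [h, mul_zero] at this
    exact absurd this.symm (ne_of_gt hK.det_pos)
  have hinv : Q⁻¹ * Q = 1 := Matrix.nonsing_inv_mul _ hdet
  have hQsym : (Matrix.toEuclideanLin Q).IsSymmetric :=
    (Matrix.isHermitian_iff_isSymmetric).1 hQpsd.1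
  have hQisym : (Matrix.toEuclideanLin Q⁻¹).IsSymmetric :=
    (Matrix.isHermitian_iff_isSymmetric).1 hQpsd.inv.1
  set M := Q⁻¹ * S * Q⁻¹ with hMdef
  set w := Matrix.toEuclideanLin Q x with hwdef
  have hxw : Matrix.toEuclideanLin Q⁻¹ w = x := by
    rw [hwdef, ← tEL_mul, hinv, tEL_one]
  have hMw : Matrix.toEuclideanLin M w =
      Matrix.toEuclideanLin Q⁻¹ (Matrix.toEuclideanLin S x) := by
    rw [hMdef, tEL_mul, tEL_mul, hxw]
  have key : ⟪x, Matrix.toEuclideanLin S x⟫ = ⟪w, Matrix.toEuclideanLin M w⟫ := by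
    rw [hMw, ← hQisym w, hxw]
  have hclm : Matrix.toEuclideanLin M w = Matrix.toEuclideanCLM (𝕜 := ℝ) M w := by
    rw [← Matrix.coe_toEuclideanCLM_eq_toEuclideanLin]
    rfl
  have hw2 : ‖w‖ ^ 2 = ⟪x, Matrix.toEuclideanLin K x⟫ := by
    rw [← real_inner_self_eq_norm_sq, hwdef, hQsym x, ← tEL_mul, hQQ]
  have hbound : ⟪w, Matrix.toEuclideanLin M w⟫ ≤
      ‖Matrix.toEuclideanCLM (𝕜 := ℝ) M‖ * ‖w‖ ^ 2 := by
    calc ⟪w, Matrix.toEuclideanLin M w⟫ ≤ ‖w‖ * ‖Matrix.toEuclideanLin M w‖ :=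
          real_inner_le_norm _ _
      _ ≤ ‖w‖ * (‖Matrix.toEuclideanCLM (𝕜 := ℝ) M‖ * ‖w‖) := by
          rw [hclm]
          exact mul_le_mul_of_nonneg_left ((Matrix.toEuclideanCLM (𝕜 := ℝ) M).le_opNorm w)
            (norm_nonneg _)
      _ = ‖Matrix.toEuclideanCLM (𝕜 := ℝ) M‖ * ‖w‖ ^ 2 := by ring
  rw [key, ← hw2]
  exact hbound

lemma posDef_smul_one {σ : ℝ} (hσ : 0 < σ) :
    (σ • (1 : Matrix (Fin n) (Fin n) ℝ)).PosDef := by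
  refine Matrix.PosDef.of_dotProduct_mulVec_pos (herm_smul_one σ) fun x hx => ?_
  have h1 : (σ • (1 : Matrix (Fin n) (Fin n) ℝ)) *ᵥ x = σ • x := by
    rw [Matrix.smul_mulVec, Matrix.one_mulVec]
  rw [h1]
  have h2 : star x ⬝ᵥ (σ • x) = σ * ∑ i, x i ^ 2 := by
    simp only [dotProduct, Pi.smul_apply, star_trivial, smul_eq_mul, Finset.mul_sum]
    exact Finset.sum_congr rfl fun i _ => by ring
  rw [h2]
  have h3 : 0 < ∑ i, x i ^ 2 := by
    obtain ⟨j, hj⟩ := Function.ne_iff.1 hx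
    exact Finset.sum_pos' (fun i _ => sq_nonneg _)
      ⟨j, Finset.mem_univ j, lt_of_le_of_ne (sq_nonneg _) (Ne.symm (pow_ne_zero 2 hj))⟩
  positivity

lemma resid_bounds (hn : 0 < n) {A : Matrix (Fin n) (Fin n) ℝ} (hA : A.PosSemidef)
    {σ : ℝ} (hσ : 0 < σ) (Y : E) (hY : Y ≠ 0) :
    ∃ t : ℝ, 0 < t ∧ ‖Y - Matrix.toEuclideanLin (A * (A + σ • 1)⁻¹) Y‖ = σ * t ∧
      ‖Y‖ ≤ sSup (spectrum ℝ (A + σ • 1)) * t ∧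
      sInf (spectrum ℝ (A + σ • 1)) * t ≤ ‖Y‖ := by
  have hP : (A + σ • 1).PosDef := Matrix.PosDef.posSemidef_add hA (posDef_smul_one hσ)
  have hdet : IsUnit (A + σ • 1).det := isUnit_iff_ne_zero.2 (ne_of_gt hP.det_pos)
  set z := Matrix.toEuclideanLin (A + σ • 1)⁻¹ Y with hz
  have hPz : Matrix.toEuclideanLin (A + σ • 1) z = Y := by
    rw [hz, ← tEL_mul, Matrix.mul_nonsing_inv _ hdet, tEL_one]
  have hz0 : z ≠ 0 := by
    intro h
    rw [h, map_zero] at hPz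
    exact hY hPz.symm
  have hres : Y - Matrix.toEuclideanLin (A * (A + σ • 1)⁻¹) Y = σ • z := by
    have hmat : A * (A + σ • 1)⁻¹ = 1 - σ • (A + σ • 1)⁻¹ := by
      have h2 : (A + σ • 1) * (A + σ • 1)⁻¹ = 1 := Matrix.mul_nonsing_inv _ hdet
      have h3 : (A + σ • 1) * (A + σ • 1)⁻¹ =
          A * (A + σ • 1)⁻¹ + σ • (A + σ • 1)⁻¹ := by
        rw [Matrix.add_mul, Matrix.smul_mul, Matrix.one_mul]
      rw [h2] at h3
      rw [eq_sub_iff_add_eq, ← h3]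
    rw [hmat, map_sub, _root_.map_smul]
    simp only [LinearMap.sub_apply, LinearMap.smul_apply, tEL_one]
    abel
  refine ⟨‖z‖, norm_pos_iff.2 hz0, ?_, ?_, ?_⟩
  · rw [hres, norm_smul, Real.norm_eq_abs, abs_of_pos hσ]
  · rw [← hPz]; exact norm_tEL_le hn hP z
  · rw [← hPz]; exact le_norm_tEL hn hP z

lemma layer_bounds (hn : 0 < n) {K S : Matrix (Fin n) (Fin n) ℝ} (hK : K.PosDef)
    (hS : S.PosSemidef) {σ : ℝ} (hσ : 0 < σ) {η : ℝ}
    (hη : η = ‖Matrix.toEuclideanCLM (𝕜 := ℝ)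
        ((CFC.sqrt K)⁻¹ * S * (CFC.sqrt K)⁻¹)‖) :
    sSup (spectrum ℝ (K + σ • 1)) ≤ sSup (spectrum ℝ (K + S + σ • 1)) ∧
    sSup (spectrum ℝ (K + S + σ • 1)) ≤ (1 + η) * sSup (spectrum ℝ (K + σ • 1)) ∧
    sInf (spectrum ℝ (K + σ • 1)) ≤ sInf (spectrum ℝ (K + S + σ • 1)) := by
  have hKσ : (K + σ • 1).PosDef := hK.add_posSemidef (posDef_smul_one hσ).posSemidef
  have hP : (K + S + σ • 1).PosDef :=
    (hK.add_posSemidef hS).add_posSemidef (posDef_smul_one hσ).posSemidef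
  have hη0 : 0 ≤ η := hη ▸ norm_nonneg _
  have hlM : 0 < sSup (spectrum ℝ (K + σ • 1)) := lmax_pos hn hKσ
  have hquadP : ∀ x : E, ⟪x, Matrix.toEuclideanLin (K + S + σ • 1) x⟫ =
      ⟪x, Matrix.toEuclideanLin (K + σ • 1) x⟫ + ⟪x, Matrix.toEuclideanLin S x⟫ := by
    intro x
    rw [quad_add (M := K + S) (N := σ • 1), quad_add (M := K) (N := S),
      quad_add (M := K) (N := σ • 1)]
    ring
  refine ⟨?_, ?_, ?_⟩
  · obtain ⟨v, hv1, hv⟩ := exists_unit_eigen hKσ.1 (lmax_mem hn hKσ.1)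
    have e1 : ⟪v, Matrix.toEuclideanLin (K + σ • 1) v⟫ = sSup (spectrum ℝ (K + σ • 1)) := by
      rw [hv, real_inner_smul_right, real_inner_self_eq_norm_sq, hv1]; ring
    have e2 := quad_le_lmax hP.1 v
    rw [hquadP v, e1, hv1] at e2
    have e3 := quad_nonneg hS v
    simpa using le_trans (by linarith) e2
  · apply lmax_le hn hP.1
    intro x hx
    rw [hquadP x]
    have e1 : ⟪x, Matrix.toEuclideanLin S x⟫ ≤ η * ⟪x, Matrix.toEuclideanLin K x⟫ := by
      rw [hη]; exact quad_S_le hK hS x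
    have e2 := quad_le_lmax hKσ.1 x
    rw [hx] at e2
    simp only [one_pow, mul_one] at e2
    have e3 : ⟪x, Matrix.toEuclideanLin (K + σ • 1) x⟫ =
        ⟪x, Matrix.toEuclideanLin K x⟫ + σ * ‖x‖ ^ 2 := by
      rw [quad_add (M := K) (N := σ • 1), quad_smul_one]
    rw [hx] at e3
    simp only [one_pow, mul_one] at e3
    have e4 := quad_nonneg hK.posSemidef x
    nlinarith
  · apply le_lmin hn hP.1
    intro x hx
    rw [hquadP x]
    have e2 := lmin_le_quad hKσ.1 x
    rw [hx] at e2
    simp only [one_pow, mul_one] at e2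
    have e3 := quad_nonneg hS x
    linarith


lemma arith_hc1 {lm lM c : ℝ} (h0 : 0 < lm) (h1 : lm ≤ lM) (h2 : lM ≤ c * lm) : 1 ≤ c := by
  nlinarith

lemma arith_hh {η ζ c : ℝ} (hη0 : 0 ≤ η) (hη1 : η < 1) (hζ0 : 0 ≤ ζ) (hζ1 : ζ < 1)
    (hc1 : 1 ≤ c) : (1 + η) ^ 2 * c ≤ (c / (1 - η) ^ 2) * (c / (1 - ζ) ^ 2) := by
  have h1 : 0 < 1 - η := by linarith
  have h2 : 0 < 1 - ζ := by linarith
  have hc0 : 0 < c := by linarith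
  rw [div_mul_div_comm, le_div_iff₀ (by positivity)]
  have e1 : (1 + η) ^ 2 * (1 - η) ^ 2 = (1 - η ^ 2) ^ 2 := by ring
  have hη2 : η ^ 2 ≤ 1 := by nlinarith
  have e2 : (1 - η ^ 2) ^ 2 ≤ 1 := by nlinarith [sq_nonneg η]
  have e3 : (1 - ζ) ^ 2 ≤ 1 := by nlinarith
  calc (1 + η) ^ 2 * c * ((1 - η) ^ 2 * (1 - ζ) ^ 2)
      = ((1 + η) ^ 2 * (1 - η) ^ 2) * (1 - ζ) ^ 2 * c := by ring
    _ ≤ 1 * 1 * c := by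
        have h4 : 0 ≤ (1 - ζ) ^ 2 := sq_nonneg _
        have h5 : ((1 + η) ^ 2 * (1 - η) ^ 2) * (1 - ζ) ^ 2 ≤ 1 := by
          rw [e1]
          nlinarith [sq_nonneg (1 - η ^ 2)]
        nlinarith
    _ ≤ c * c := by nlinarith

lemma arith_key {L lM lm c η b m2 L2 : ℝ} (hL0 : 0 < L) (hlm0 : 0 < lm) (hlM0 : 0 < lM)
    (hLle : L ≤ (1 + η) * lM) (hcge : lM ≤ c * lm) (hm : lm ≤ m2) (hL2 : lM ≤ L2)
    (hη0 : 0 ≤ η) (hbge : (1 + η) ^ 2 * c ≤ b) (hb0 : 0 < b) : L ^ 2 ≤ b * m2 * L2 := by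
  have s1 : L ^ 2 ≤ (1 + η) ^ 2 * (lM * lM) := by nlinarith
  have s2 : (1 + η) ^ 2 * (lM * lM) ≤ (1 + η) ^ 2 * (c * (lm * lM)) := by
    have : lM * lM ≤ c * (lm * lM) := by nlinarith
    nlinarith [sq_nonneg (1 + η)]
  have s3 : (1 + η) ^ 2 * (c * (lm * lM)) ≤ b * (lm * lM) := by
    have h := mul_pos hlm0 hlM0
    nlinarith
  have s4 : b * (lm * lM) ≤ b * (m2 * L2) := by
    have h6 : lm * lM ≤ m2 * L2 := mul_le_mul hm hL2 hlM0.le (by linarith)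
    exact mul_le_mul_of_nonneg_left h6 hb0.le
  linarith

lemma arith_div1 {L1 L2 m2 b : ℝ} (hb0 : 0 < b) (hL10 : 0 < L1) (hL20 : 0 < L2)
    (hm20 : 0 < m2) (key : L1 ^ 2 ≤ b * m2 * L2) : L1 / (b * L2) ≤ m2 / L1 := by
  rw [div_le_div_iff₀ (by positivity) hL10]
  nlinarith

lemma arith_div2 {L1 L2 m1 b : ℝ} (hb0 : 0 < b) (hL10 : 0 < L1) (hL20 : 0 < L2)
    (hm10 : 0 < m1) (key : L2 ^ 2 ≤ b * m1 * L1) : L2 / m1 ≤ b * L1 / L2 := by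
  rw [div_le_div_iff₀ hm10 hL20]
  nlinarith

set_option maxHeartbeats 1000000

/-- For real symmetric `K ≻ 0`, `S₁, S₂ ⪰ 0`, `σ > 0`, `Y ≠ 0`, with
`κ(K + σI) ≤ c`, `η_l = ‖K^{−1/2} S_l K^{−1/2}‖ < 1`, `a_l = c/(1 − η_l)²` and
`b = a₁ a₂`, the kernel ridge residuals `R(A) = ‖Y − A(A + σI)⁻¹Y‖²` satisfy
`λmax(K+S₁+σI)/(b λmax(K+S₂+σI)) ≤ √(R(K+S₁)/R(K+S₂)) ≤ b λmax(K+S₁+σI)/λmax(K+S₂+σI)`. -/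
theorem risk_ratio_bounds_of_two_candidate_layers
    {n : ℕ} (hn : 0 < n) (K S₁ S₂ : Matrix (Fin n) (Fin n) ℝ)
    (hKsymm : K.IsSymm) (hS₁symm : S₁.IsSymm) (hS₂symm : S₂.IsSymm)
    (hK : K.PosDef) (hS₁ : S₁.PosSemidef) (hS₂ : S₂.PosSemidef)
    (σ : ℝ) (hσ : 0 < σ) (Y : EuclideanSpace ℝ (Fin n)) (hY : Y ≠ 0)
    (c : ℝ) (hc : (sSup (spectrum ℝ K) + σ) / (sInf (spectrum ℝ K) + σ) ≤ c)
    (η₁ η₂ : ℝ)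
    (hη₁ : η₁ = ‖Matrix.toEuclideanCLM (𝕜 := ℝ)
        ((CFC.sqrt K)⁻¹ * S₁ * (CFC.sqrt K)⁻¹)‖)
    (hη₂ : η₂ = ‖Matrix.toEuclideanCLM (𝕜 := ℝ)
        ((CFC.sqrt K)⁻¹ * S₂ * (CFC.sqrt K)⁻¹)‖)
    (hη₁1 : η₁ < 1) (hη₂1 : η₂ < 1)
    (b : ℝ) (hb : b = (c / (1 - η₁) ^ 2) * (c / (1 - η₂) ^ 2)) :
    sSup (spectrum ℝ (K + S₁ + σ • 1)) / (b * sSup (spectrum ℝ (K + S₂ + σ • 1))) ≤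
        Real.sqrt
          (‖Y - Matrix.toEuclideanLin ((K + S₁) * ((K + S₁) + σ • 1)⁻¹) Y‖ ^ 2 /
            ‖Y - Matrix.toEuclideanLin ((K + S₂) * ((K + S₂) + σ • 1)⁻¹) Y‖ ^ 2) ∧
      Real.sqrt
          (‖Y - Matrix.toEuclideanLin ((K + S₁) * ((K + S₁) + σ • 1)⁻¹) Y‖ ^ 2 /
            ‖Y - Matrix.toEuclideanLin ((K + S₂) * ((K + S₂) + σ • 1)⁻¹) Y‖ ^ 2) ≤
        b * sSup (spectrum ℝ (K + S₁ + σ • 1)) / sSup (spectrum ℝ (K + S₂ + σ • 1)) := by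
  obtain ⟨hL1ge, hL1le, hm1ge⟩ := layer_bounds hn hK hS₁ hσ hη₁
  obtain ⟨hL2ge, hL2le, hm2ge⟩ := layer_bounds hn hK hS₂ hσ hη₂
  set lM := sSup (spectrum ℝ (K + σ • 1)) with hlMdef
  set lm := sInf (spectrum ℝ (K + σ • 1)) with hlmdef
  set L₁ := sSup (spectrum ℝ (K + S₁ + σ • 1)) with hL₁def
  set L₂ := sSup (spectrum ℝ (K + S₂ + σ • 1)) with hL₂def
  set m₁ := sInf (spectrum ℝ (K + S₁ + σ • 1)) with hm₁def
  set m₂ := sInf (spectrum ℝ (K + S₂ + σ • 1)) with hm₂def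
  have hKσ : (K + σ • 1).PosDef := hK.add_posSemidef (posDef_smul_one hσ).posSemidef
  have hlm0 : 0 < lm := lmin_pos hn hKσ
  have hlmM : lm ≤ lM := lmin_le_lmax hn hKσ.1
  have hlM0 : 0 < lM := lt_of_lt_of_le hlm0 hlmM
  have hm₁0 : 0 < m₁ := lt_of_lt_of_le hlm0 hm1ge
  have hm₂0 : 0 < m₂ := lt_of_lt_of_le hlm0 hm2ge
  have hL₁0 : 0 < L₁ := lt_of_lt_of_le hlM0 hL1ge
  have hL₂0 : 0 < L₂ := lt_of_lt_of_le hlM0 hL2ge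
  have hshM : lM = sSup (spectrum ℝ K) + σ := lmax_shift hn hK.1 σ
  have hshm : lm = sInf (spectrum ℝ K) + σ := lmin_shift hn hK.1 σ
  have hKbase : 0 < sInf (spectrum ℝ K) + σ := hshm ▸ hlm0
  have hcge : lM ≤ c * lm := by
    rw [hshM, hshm]
    exact (div_le_iff₀ hKbase).1 hc
  have hc1 : 1 ≤ c := arith_hc1 hlm0 hlmM hcge
  have hc0 : 0 < c := lt_of_lt_of_le one_pos hc1
  have hη₁0 : 0 ≤ η₁ := hη₁ ▸ norm_nonneg _
  have hη₂0 : 0 ≤ η₂ := hη₂ ▸ norm_nonneg _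
  have h1η₁ : 0 < 1 - η₁ := by linarith
  have h1η₂ : 0 < 1 - η₂ := by linarith
  have hb0 : 0 < b := by
    rw [hb]
    exact mul_pos (div_pos hc0 (by positivity)) (div_pos hc0 (by positivity))
  have hh₁ : (1 + η₁) ^ 2 * c ≤ b := hb ▸ arith_hh hη₁0 hη₁1 hη₂0 hη₂1 hc1
  have hh₂ : (1 + η₂) ^ 2 * c ≤ b := by
    rw [hb, mul_comm (c / (1 - η₁) ^ 2)]
    exact arith_hh hη₂0 hη₂1 hη₁0 hη₁1 hc1
  obtain ⟨t₁, ht₁0, hres₁, hub₁, hlb₁⟩ := resid_bounds hn (hK.posSemidef.add hS₁) hσ Y hY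
  obtain ⟨t₂, ht₂0, hres₂, hub₂, hlb₂⟩ := resid_bounds hn (hK.posSemidef.add hS₂) hσ Y hY
  have hrew : Real.sqrt
      (‖Y - Matrix.toEuclideanLin ((K + S₁) * ((K + S₁) + σ • 1)⁻¹) Y‖ ^ 2 /
        ‖Y - Matrix.toEuclideanLin ((K + S₂) * ((K + S₂) + σ • 1)⁻¹) Y‖ ^ 2) = t₁ / t₂ := by
    rw [hres₁, hres₂]
    have h : (σ * t₁) ^ 2 / (σ * t₂) ^ 2 = (t₁ / t₂) ^ 2 := by
      field_simp
    rw [h, Real.sqrt_sq (by positivity)]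
  rw [hrew]
  have hrat_ub : t₁ / t₂ ≤ L₂ / m₁ := by
    rw [div_le_div_iff₀ ht₂0 hm₁0]
    linarith [mul_comm t₁ m₁, hlb₁, hub₂]
  have hrat_lb : m₂ / L₁ ≤ t₁ / t₂ := by
    rw [div_le_div_iff₀ hL₁0 ht₂0]
    linarith [mul_comm t₁ L₁, hlb₂, hub₁]
  have key₁ : L₁ ^ 2 ≤ b * m₂ * L₂ :=
    arith_key hL₁0 hlm0 hlM0 hL1le hcge hm2ge hL2ge hη₁0 hh₁ hb0
  have key₂ : L₂ ^ 2 ≤ b * m₁ * L₁ :=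
    arith_key hL₂0 hlm0 hlM0 hL2le hcge hm1ge hL1ge hη₂0 hh₂ hb0
  exact ⟨le_trans (arith_div1 hb0 hL₁0 hL₂0 hm₂0 key₁) hrat_lb,
    le_trans hrat_ub (arith_div2 hb0 hL₁0 hL₂0 hm₁0 key₂)⟩
end
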